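/- arXiv:2510.12315 — 10 statements merged into one kernel-verified Lean document; each statement's English description precedes it below -/
import Mathlib

section
/- Let a be a real-valued sequence of length n and let 0 ≤ k ≤ n-1. For 1 ≤ i ≤ n let R_i = (T^i(a))^{n-k} denote the sequence formed by the first n-k entries of T^i(a) (the rows of the truncated circulant matrix Cir(a)^k). Then for every λ with 0 ≤ λ ≤ n-1-k, Σ_{i=1}^{n} A(R_i)(λ) = (n-λ-k) · (A(a)(λ) + A(a)(n-λ)), where A(a)(n) is understood to be 0. -/
/-- Aperiodic cross-correlation function of two length-`L` real sequences:
`C(a,b)(λ) = Σ_{i=0}^{L-1-λ} a i * b (i+λ)` for `0 ≤ λ ≤ L-1`, and `0` for `λ ≥ L`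
(in particular `C(a,b)(L) = 0`). -/
noncomputable def ACCF (L : ℕ) (a b : ℕ → ℝ) (lam : ℕ) : ℝ :=
  ∑ i ∈ Finset.range (L - lam), a i * b (i + lam)

/-- Aperiodic autocorrelation function `A(a)(λ) = C(a,a)(λ)`. -/
noncomputable def AACF (L : ℕ) (a : ℕ → ℝ) (lam : ℕ) : ℝ := ACCF L a a lam

lemma shift_sum (n c : ℕ) [NeZero n] (g : ℕ → ℝ) :
    ∑ j ∈ Finset.range n, g ((j + c) % n) = ∑ j ∈ Finset.range n, g (j % n) := by
  rw [← Fin.sum_univ_eq_sum_range, ← Fin.sum_univ_eq_sum_range]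
  refine Fintype.sum_equiv (Equiv.addRight (Fin.ofNat n c)) _ _ (fun x => ?_)
  congr 1
  simp [Fin.add_def, Nat.add_mod]


/--
Let `a` be a real sequence of length `n` and `0 ≤ k ≤ n-1`.
For `1 ≤ i ≤ n` let `R_i` be the first `n-k` entries of
`T^i(a)` (the rows of the truncated circulant matrix `Cir(a)^k`), where
`T^i(a)_m = a_{(i-1-m) mod n}` is realized as `a ((i - 1 + n - m) % n)`.
Then for every `0 ≤ λ ≤ n-1-k`,
`Σ_{i=1}^n A(R_i)(λ) = (n-λ-k) * (A(a)(λ) + A(a)(n-λ))`,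
with `A(a)(n) = 0`.
-/
theorem stmt4 (n k : ℕ) (hn : 1 ≤ n) (hk : k ≤ n - 1)
    (a : ℕ → ℝ) (lam : ℕ) (hlam : lam ≤ n - 1 - k) :
    (∑ i ∈ Finset.Icc 1 n,
        AACF (n - k) (fun m => a ((i - 1 + n - m) % n)) lam) =
      ((n - lam - k : ℕ) : ℝ) * (AACF n a lam + AACF n a (n - lam)) := by
  have hkl : k + lam + 1 ≤ n := by omega
  haveI : NeZero n := ⟨by omega⟩
  set S : ℝ := ∑ j ∈ Finset.range n, a ((j + lam) % n) * a j with hS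
  -- Step 1: inner sum over i equals S for each m
  have key : ∀ m ∈ Finset.range (n - k - lam),
      (∑ i ∈ Finset.Icc 1 n,
        a ((i - 1 + n - m) % n) * a ((i - 1 + n - (m + lam)) % n)) = S := by
    intro m hm
    rw [Finset.mem_range] at hm
    have hmn : m + lam + k < n := by omega
    set g : ℕ → ℝ := fun x => a ((x + lam) % n) * a (x % n) with hg
    set c : ℕ := n - m - lam with hc
    have h1 : (∑ i ∈ Finset.Icc 1 n,
        a ((i - 1 + n - m) % n) * a ((i - 1 + n - (m + lam)) % n))
        = ∑ j ∈ Finset.range n, g ((j + c) % n) := by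
      rw [← Finset.Ico_add_one_right_eq_Icc, Finset.sum_Ico_eq_sum_range]
      have hn1 : n + 1 - 1 = n := by omega
      rw [hn1]
      refine Finset.sum_congr rfl (fun j hj => ?_)
      simp only [hg]
      have e1 : (1 + j - 1 + n - m) = j + c + lam := by omega
      have e2 : (1 + j - 1 + n - (m + lam)) = j + c := by omega
      rw [e1, e2, Nat.mod_add_mod, Nat.mod_mod_of_dvd _ dvd_rfl]
    rw [h1, shift_sum, hS]
    refine Finset.sum_congr rfl (fun j hj => ?_)
    rw [Finset.mem_range] at hj
    simp only [hg]
    rw [Nat.mod_add_mod, Nat.mod_mod_of_dvd _ dvd_rfl, Nat.mod_eq_of_lt hj]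
  -- Step 2: S equals the sum of the two aperiodic correlations
  have hSval : S = AACF n a lam + AACF n a (n - lam) := by
    have hsplit : n = (n - lam) + lam := by omega
    rw [hS]
    rw [show Finset.range n = Finset.range ((n - lam) + lam) from by rw [← hsplit]]
    rw [Finset.sum_range_add]
    congr 1
    · unfold AACF ACCF
      refine Finset.sum_congr rfl (fun j hj => ?_)
      rw [Finset.mem_range] at hj
      rw [Nat.mod_eq_of_lt (by omega), mul_comm]
    · unfold AACF ACCF
      have hnl : n - (n - lam) = lam := by omega
      rw [hnl]
      refine Finset.sum_congr rfl (fun j hj => ?_)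
      rw [Finset.mem_range] at hj
      have e1 : n - lam + j + lam = n + j := by omega
      have e2 : (n + j) % n = j := by
        rw [Nat.add_mod_left, Nat.mod_eq_of_lt (by omega)]
      rw [e1, e2]
      ring_nf
  -- Assemble
  unfold AACF ACCF
  rw [Finset.sum_comm]
  have hnk : n - k - lam = n - lam - k := by omega
  calc (∑ m ∈ Finset.range (n - k - lam), ∑ i ∈ Finset.Icc 1 n,
          a ((i - 1 + n - m) % n) * a ((i - 1 + n - (m + lam)) % n))
      = ∑ m ∈ Finset.range (n - k - lam), S := Finset.sum_congr rfl key
    _ = ((n - lam - k : ℕ) : ℝ) * S := by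
        rw [Finset.sum_const, Finset.card_range, nsmul_eq_mul, hnk]
    _ = _ := by rw [hSval]; simp [AACF, ACCF]
end

section
/- Let a and b be real-valued sequences of length n and let 0 ≤ k ≤ n-1. Let Z^k be the n × (2n-k) matrix obtained from the block matrix [Cir(a) | Cir(b)] by deleting its last k columns, so its i-th row is R_i = (T^i(a), (T^i(b))^{n-k}) for 1 ≤ i ≤ n. Then for every λ with 0 ≤ λ ≤ n-k and λ ≤ n-1, Σ_{i=1}^{n} A(R_i)(λ) = (n-λ) · (A(a)(λ) + A(a)(n-λ)) + (n-λ-k) · (A(b)(λ) + A(b)(n-λ)) + λ · (C(b,a)(λ) + C(a,b)(n-λ)), where A(·)(n) and C(·,·)(n) are understood to be 0. -/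
lemma mod_key (n c x : ℕ) (hn : 0 < n) (hx : x < n) :
    (x + c + (n - c % n)) % n = x := by
  have h : c / n * n + c % n = c := Nat.div_add_mod' c n
  have hcm : c % n < n := Nat.mod_lt _ hn
  have hle : c % n ≤ c := Nat.mod_le c n
  have he : x + c + (n - c % n) = x + (c / n) * n + n := by omega
  rw [he, Nat.add_mod_right, Nat.add_mul_mod_self_right, Nat.mod_eq_of_lt hx]

lemma sum_range_shift (n : ℕ) (hn : 0 < n) (f : ℕ → ℝ) (c : ℕ) :
    ∑ j ∈ Finset.range n, f ((j + c) % n) = ∑ j ∈ Finset.range n, f j := by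
  apply Finset.sum_nbij' (i := fun j => (j + c) % n) (j := fun j => (j + (n - c % n)) % n)
  · intro x hx; exact Finset.mem_range.mpr (Nat.mod_lt _ hn)
  · intro x hx; exact Finset.mem_range.mpr (Nat.mod_lt _ hn)
  · intro x hx
    rw [Nat.mod_add_mod]
    exact mod_key n c x hn (Finset.mem_range.mp hx)
  · intro x hx
    rw [Nat.mod_add_mod]
    have : x + (n - c % n) + c = x + c + (n - c % n) := by ring
    rw [this]
    exact mod_key n c x hn (Finset.mem_range.mp hx)
  · intro x hx; rfl

lemma sum_Icc_shift (n : ℕ) (hn : 0 < n) (f : ℕ → ℝ) (c : ℕ) :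
    ∑ i ∈ Finset.Icc 1 n, f ((i - 1 + c) % n) = ∑ j ∈ Finset.range n, f j := by
  rw [← sum_range_shift n hn f c]
  apply Finset.sum_nbij' (i := fun i => i - 1) (j := fun j => j + 1)
  · intro x hx; simp only [Finset.mem_Icc] at hx; exact Finset.mem_range.mpr (by omega)
  · intro x hx; simp only [Finset.mem_range] at hx; exact Finset.mem_Icc.mpr (by omega)
  · intro x hx; simp only [Finset.mem_Icc] at hx; omega
  · intro x hx; omega
  · intro x hx; rfl

lemma periodic_corr (n lam : ℕ) (hlam : lam ≤ n) (u v : ℕ → ℝ) :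
    ∑ j ∈ Finset.range n, u ((j + lam) % n) * v j
      = ACCF n v u lam + ACCF n u v (n - lam) := by
  rw [Finset.range_eq_Ico, ← Finset.sum_Ico_consecutive _ (Nat.zero_le (n - lam)) (by omega : n - lam ≤ n)]
  congr 1
  · rw [← Finset.range_eq_Ico]
    unfold ACCF
    apply Finset.sum_congr rfl
    intro j hj
    have hj' := Finset.mem_range.mp hj
    rw [Nat.mod_eq_of_lt (by omega), mul_comm]
  · rw [Finset.sum_Ico_eq_sum_range]
    unfold ACCF
    have hc : n - (n - lam) = lam := by omega
    rw [hc]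
    apply Finset.sum_congr rfl
    intro j hj
    have hj' := Finset.mem_range.mp hj
    have h1 : (n - lam + j + lam) % n = j := by
      have : n - lam + j + lam = j + n := by omega
      rw [this, Nat.add_mod_right, Nat.mod_eq_of_lt (by omega)]
    rw [h1, add_comm j (n - lam)]

lemma innerSumCorr (n lam p q : ℕ) (hn : 0 < n) (hlam : lam ≤ n)
    (hpq : p % n = (q + lam) % n) (u v : ℕ → ℝ) :
    ∑ i ∈ Finset.Icc 1 n, u ((i - 1 + p) % n) * v ((i - 1 + q) % n)
      = ACCF n v u lam + ACCF n u v (n - lam) := by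
  have key : ∀ i : ℕ, (i - 1 + p) % n = ((i - 1 + q) % n + lam) % n := by
    intro i
    rw [Nat.mod_add_mod, Nat.add_mod (i-1) p, hpq, ← Nat.add_mod, ← Nat.add_assoc]
  have : ∑ i ∈ Finset.Icc 1 n, u ((i - 1 + p) % n) * v ((i - 1 + q) % n)
      = ∑ i ∈ Finset.Icc 1 n, (fun j => u ((j + lam) % n) * v (j % n)) ((i - 1 + q) % n) := by
    apply Finset.sum_congr rfl
    intro i _
    simp only
    have hv : (i - 1 + q) % n % n = (i - 1 + q) % n :=
      Nat.mod_eq_of_lt (Nat.mod_lt _ hn)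
    rw [key i, hv]
  have h2 := sum_Icc_shift n hn (fun j => u ((j + lam) % n) * v (j % n)) q
  rw [this, h2, ← periodic_corr n lam hlam u v]
  apply Finset.sum_congr rfl
  intro j hj
  rw [Nat.mod_eq_of_lt (Finset.mem_range.mp hj)]


/--
Let `a`, `b` be real sequences of length `n` and `0 ≤ k ≤ n-1`.
Let `Z^k` be the `n × (2n-k)` matrix obtained from `[Cir(a) | Cir(b)]` by
deleting the last `k` columns, so its `i`-th row (`1 ≤ i ≤ n`) is
`R_i = (T^i(a), (T^i(b))^{n-k})`, where `T^i(v)_m = v_{(i-1-m) mod n}` is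
realized as `v ((i - 1 + n - m) % n)`.  Then for every `λ` with `λ ≤ n-k` and
`λ ≤ n-1`,
`Σ_{i=1}^n A(R_i)(λ) = (n-λ)(A(a)(λ)+A(a)(n-λ)) + (n-λ-k)(A(b)(λ)+A(b)(n-λ))
  + λ(C(b,a)(λ)+C(a,b)(n-λ))`,
with `A(·)(n) = 0` and `C(·,·)(n) = 0`.
-/
theorem stmt5 (n k : ℕ) (hn : 1 ≤ n) (hk : k ≤ n - 1)
    (a b : ℕ → ℝ) (lam : ℕ) (hlam1 : lam ≤ n - k) (hlam2 : lam ≤ n - 1) :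
    (∑ i ∈ Finset.Icc 1 n,
        AACF (2 * n - k)
          (fun m => if m < n then a ((i - 1 + n - m) % n)
                    else b ((i - 1 + n - (m - n)) % n)) lam) =
      ((n - lam : ℕ) : ℝ) * (AACF n a lam + AACF n a (n - lam)) +
      ((n - lam - k : ℕ) : ℝ) * (AACF n b lam + AACF n b (n - lam)) +
      (lam : ℝ) * (ACCF n b a lam + ACCF n a b (n - lam)) := by
  have hn0 : 0 < n := hn
  have hkn : k ≤ n - 1 := hk
  have hlamn : lam ≤ n := by omega
  have hkl : k + lam ≤ n := by omega
  unfold AACF ACCF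
  rw [Finset.sum_comm]
  have hsplit : 2 * n - k - lam = 2 * n - k - lam := rfl
  rw [Finset.range_eq_Ico,
    ← Finset.sum_Ico_consecutive _ (Nat.zero_le n) (by omega : n ≤ 2 * n - k - lam),
    ← Finset.sum_Ico_consecutive _ (Nat.zero_le (n - lam)) (by omega : n - lam ≤ n)]
  have part1 : ∀ m ∈ Finset.Ico 0 (n - lam),
      (∑ i ∈ Finset.Icc 1 n,
        (if m < n then a ((i - 1 + n - m) % n) else b ((i - 1 + n - (m - n)) % n)) *
        (if m + lam < n then a ((i - 1 + n - (m + lam)) % n)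
          else b ((i - 1 + n - (m + lam - n)) % n)))
      = ACCF n a a lam + ACCF n a a (n - lam) := by
    intro m hm
    have hm' : m < n - lam := (Finset.mem_Ico.mp hm).2
    have h1 : m < n := by omega
    have h2 : m + lam < n := by omega
    have := innerSumCorr n lam (n - m) (n - m - lam) hn0 hlamn (by congr 1; omega) a a
    rw [← this]
    apply Finset.sum_congr rfl
    intro i hi
    simp only [if_pos h1, if_pos h2]
    have e1 : i - 1 + n - m = i - 1 + (n - m) := by omega
    have e2 : i - 1 + n - (m + lam) = i - 1 + (n - m - lam) := by omega
    rw [e1, e2]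
  have part2 : ∀ m ∈ Finset.Ico (n - lam) n,
      (∑ i ∈ Finset.Icc 1 n,
        (if m < n then a ((i - 1 + n - m) % n) else b ((i - 1 + n - (m - n)) % n)) *
        (if m + lam < n then a ((i - 1 + n - (m + lam)) % n)
          else b ((i - 1 + n - (m + lam - n)) % n)))
      = ACCF n b a lam + ACCF n a b (n - lam) := by
    intro m hm
    have hm1 := (Finset.mem_Ico.mp hm).1
    have hm2 := (Finset.mem_Ico.mp hm).2
    have h1 : m < n := hm2
    have h2 : ¬ (m + lam < n) := by omega
    have hpq : (2 * n - m) % n = (2 * n - m - lam + lam) % n := by congr 1; omega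
    have := innerSumCorr n lam (2 * n - m) (2 * n - m - lam) hn0 hlamn hpq a b
    rw [← this]
    apply Finset.sum_congr rfl
    intro i hi
    have hi' := Finset.mem_Icc.mp hi
    simp only [if_pos h1, if_neg h2]
    have e1 : (i - 1 + n - m) % n = (i - 1 + (2 * n - m)) % n := by
      have : i - 1 + (2 * n - m) = (i - 1 + n - m) + n := by omega
      rw [this, Nat.add_mod_right]
    have e2 : i - 1 + n - (m + lam - n) = i - 1 + (2 * n - m - lam) := by omega
    rw [e1, e2]
  have part3 : ∀ m ∈ Finset.Ico n (2 * n - k - lam),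
      (∑ i ∈ Finset.Icc 1 n,
        (if m < n then a ((i - 1 + n - m) % n) else b ((i - 1 + n - (m - n)) % n)) *
        (if m + lam < n then a ((i - 1 + n - (m + lam)) % n)
          else b ((i - 1 + n - (m + lam - n)) % n)))
      = ACCF n b b lam + ACCF n b b (n - lam) := by
    intro m hm
    have hm1 := (Finset.mem_Ico.mp hm).1
    have hm2 := (Finset.mem_Ico.mp hm).2
    have h1 : ¬ (m < n) := by omega
    have h2 : ¬ (m + lam < n) := by omega
    have hpq : (2 * n - m) % n = (2 * n - m - lam + lam) % n := by congr 1; omega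
    have := innerSumCorr n lam (2 * n - m) (2 * n - m - lam) hn0 hlamn hpq b b
    rw [← this]
    apply Finset.sum_congr rfl
    intro i hi
    simp only [if_neg h1, if_neg h2]
    have e1 : i - 1 + n - (m - n) = i - 1 + (2 * n - m) := by omega
    have e2 : i - 1 + n - (m + lam - n) = i - 1 + (2 * n - m - lam) := by omega
    rw [e1, e2]
  rw [Finset.sum_congr rfl part1, Finset.sum_congr rfl part2, Finset.sum_congr rfl part3,
    Finset.sum_const, Finset.sum_const, Finset.sum_const, Nat.card_Ico, Nat.card_Ico,
    Nat.card_Ico]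
  have c1 : n - lam - 0 = n - lam := by omega
  have c2 : n - (n - lam) = lam := by omega
  have c3 : 2 * n - k - lam - n = n - lam - k := by omega
  rw [c1, c2, c3]
  simp only [ACCF, Finset.range_eq_Ico, c2, nsmul_eq_mul]
  ring
end

section
/- Let R_1 = (a_0, …, a_{L-1}) and R_2 = (b_0, …, b_{L-1}) be real-valued sequences of length L and let 0 ≤ k ≤ L-1. Define the concatenated sequences A = (R_1, -R_1^{L-k}) and B = (R_2, -R_2^{L-k}), each of length 2L-k (the first L entries of A are those of R_1 and its last L-k entries are the negatives of the first L-k entries of R_1, and similarly for B). Then for every λ with 0 ≤ λ ≤ L-k-1, C(A,B)(λ) = C(R_1,R_2)(λ) + C(R_1^{L-k}, R_2^{L-k})(λ) - C(R_2,R_1)(L-λ), where C(·,·)(L) is understood to be 0. In particular, taking R_2 = R_1 gives the corresponding formula for A(A)(λ). -/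
/--
Let `R₁ = a`, `R₂ = b` be real sequences of length `L` and
`0 ≤ k ≤ L-1`.  Define the concatenations `A = (R₁, -R₁^{L-k})` and
`B = (R₂, -R₂^{L-k})`, each of length `2L-k` (first `L` entries those of `R₁`,
last `L-k` entries the negatives of the first `L-k` entries of `R₁`; similarly
for `B`).  Then for every `0 ≤ λ ≤ L-k-1`,
`C(A,B)(λ) = C(R₁,R₂)(λ) + C(R₁^{L-k},R₂^{L-k})(λ) - C(R₂,R₁)(L-λ)`,
with `C(·,·)(L) = 0`.  (The truncated cross-correlation
`C(R₁^{L-k},R₂^{L-k})(λ)` is `ACCF (L-k) a b λ`.)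
-/
theorem stmt6 (L k : ℕ) (hL : 1 ≤ L) (hk : k ≤ L - 1)
    (a b : ℕ → ℝ) (lam : ℕ) (hlam : lam ≤ L - k - 1) :
    ACCF (2 * L - k)
        (fun m => if m < L then a m else -a (m - L))
        (fun m => if m < L then b m else -b (m - L)) lam =
      ACCF L a b lam + ACCF (L - k) a b lam - ACCF L b a (L - lam) := by
  have h1 : lam + k + 1 ≤ L := by omega
  unfold ACCF
  rw [show 2 * L - k - lam = (L - lam) + (lam + (L - k - lam)) by omega,
    Finset.sum_range_add, Finset.sum_range_add]
  have hS1 : ∑ i ∈ Finset.range (L - lam),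
      (if i < L then a i else -a (i - L)) *
        (if i + lam < L then b (i + lam) else -b (i + lam - L)) =
      ∑ i ∈ Finset.range (L - lam), a i * b (i + lam) := by
    refine Finset.sum_congr rfl fun i hi => ?_
    rw [Finset.mem_range] at hi
    rw [if_pos (by omega), if_pos (by omega)]
  have hS2 : ∑ i ∈ Finset.range lam,
      (if L - lam + i < L then a (L - lam + i) else -a (L - lam + i - L)) *
        (if L - lam + i + lam < L then b (L - lam + i + lam)
          else -b (L - lam + i + lam - L)) =
      -∑ i ∈ Finset.range (L - (L - lam)), b i * a (i + (L - lam)) := by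
    rw [show L - (L - lam) = lam by omega, ← Finset.sum_neg_distrib]
    refine Finset.sum_congr rfl fun i hi => ?_
    rw [Finset.mem_range] at hi
    rw [if_pos (by omega), if_neg (by omega),
      show L - lam + i + lam - L = i by omega,
      show L - lam + i = i + (L - lam) by omega]
    ring
  have hS3 : ∑ i ∈ Finset.range (L - k - lam),
      (if L - lam + (lam + i) < L then a (L - lam + (lam + i))
        else -a (L - lam + (lam + i) - L)) *
        (if L - lam + (lam + i) + lam < L then b (L - lam + (lam + i) + lam)
          else -b (L - lam + (lam + i) + lam - L)) =
      ∑ i ∈ Finset.range (L - k - lam), a i * b (i + lam) := by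
    refine Finset.sum_congr rfl fun i hi => ?_
    rw [Finset.mem_range] at hi
    rw [if_neg (by omega), if_neg (by omega),
      show L - lam + (lam + i) - L = i by omega,
      show L - lam + (lam + i) + lam - L = i + lam by omega]
    ring
  rw [hS1, hS2, hS3]
  ring
end

section
/- Let a and c be real-valued sequences of length L, let 1 ≤ i, j ≤ L, and set k' = (j - i) mod L. Then the dot product T^i(a) · T^j(c) = Σ_{m=0}^{L-1} a_{(i-1-m) mod L} · c_{(j-1-m) mod L} satisfies T^i(a) · T^j(c) = C(a,c)(k') + C(c,a)(L-k'), where C(·,·)(L) is understood to be 0. -/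
/-- Helper: the map `m ↦ (s + L - m) % L` is an involution on `{m | m < L}`. -/
lemma reflect_involutive (L s m : ℕ) (hL : 0 < L) (hm : m < L) :
    (s + L - (s + L - m) % L) % L = m := by
  have hdm := Nat.div_add_mod (s + L - m) L
  have hq : (s + L - m) % L < L := Nat.mod_lt _ hL
  have h1 : s + L - (s + L - m) % L = m + L * ((s + L - m) / L) := by omega
  rw [h1, Nat.add_mul_mod_self_left, Nat.mod_eq_of_lt hm]

/--
Let `a`, `c` be real sequences of length `L`, `1 ≤ i, j ≤ L`,
and `k' = (j - i) mod L` (realized as `(j + L - i) % L`).  Then the dot product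
`T^i(a) · T^j(c) = Σ_{m=0}^{L-1} a_{(i-1-m) mod L} * c_{(j-1-m) mod L}`
equals `C(a,c)(k') + C(c,a)(L-k')`, with `C(·,·)(L) = 0`.
(Here `T^k(v)_m = v_{(k-1-m) mod L}`, realized as `v ((k - 1 + L - m) % L)`.)
-/
theorem stmt7 (L : ℕ) (hL : 1 ≤ L) (a c : ℕ → ℝ) (i j : ℕ)
    (hi1 : 1 ≤ i) (hiL : i ≤ L) (hj1 : 1 ≤ j) (hjL : j ≤ L) :
    (∑ m ∈ Finset.range L, a ((i - 1 + L - m) % L) * c ((j - 1 + L - m) % L)) =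
      ACCF L a c ((j + L - i) % L) + ACCF L c a (L - (j + L - i) % L) := by
  set k := (j + L - i) % L with hk
  have hL0 : 0 < L := hL
  have hkL : k < L := Nat.mod_lt _ hL0
  have step1 : (∑ m ∈ Finset.range L, a ((i - 1 + L - m) % L) * c ((j - 1 + L - m) % L))
      = ∑ n ∈ Finset.range L, a n * c ((n + k) % L) := by
    refine Finset.sum_bij' (fun m _ => (i - 1 + L - m) % L)
      (fun n _ => (i - 1 + L - n) % L) ?_ ?_ ?_ ?_ ?_
    · intro m _; exact Finset.mem_range.mpr (Nat.mod_lt _ hL0)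
    · intro n _; exact Finset.mem_range.mpr (Nat.mod_lt _ hL0)
    · intro m hm
      exact reflect_involutive L (i - 1) m hL0 (Finset.mem_range.mp hm)
    · intro n hn
      exact reflect_involutive L (i - 1) n hL0 (Finset.mem_range.mp hn)
    · intro m hm
      have hm' : m < L := Finset.mem_range.mp hm
      congr 1
      -- show c ((j-1+L-m)%L) = c (((i-1+L-m)%L + k)%L)
      have h1 : ((i - 1 + L - m) % L + k) % L = ((i - 1 + L - m) + (j + L - i)) % L := by
        rw [hk, ← Nat.add_mod]
      have h2 : (i - 1 + L - m) + (j + L - i) = (j - 1 + L - m) + L := by omega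
      rw [h1, h2, Nat.add_mod_right]
  rw [step1]
  have hsplit : Finset.range L = Finset.range (L - k) ∪ Finset.Ico (L - k) L := by
    rw [Finset.range_eq_Ico, Finset.range_eq_Ico]
    exact (Finset.Ico_union_Ico_eq_Ico (Nat.zero_le _) (Nat.sub_le _ _)).symm
  rw [hsplit, Finset.sum_union]
  · congr 1
    · -- first part equals ACCF L a c k
      unfold ACCF
      apply Finset.sum_congr rfl
      intro n hn
      have hn' : n < L - k := Finset.mem_range.mp hn
      rw [Nat.mod_eq_of_lt (by omega)]
    · -- second part equals ACCF L c a (L - k)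
      unfold ACCF
      rw [Finset.sum_Ico_eq_sum_range]
      have hLk : L - (L - k) = k := by omega
      rw [hLk]
      apply Finset.sum_congr rfl
      intro p hp
      have hp' : p < k := Finset.mem_range.mp hp
      have h3 : (L - k + p + k) % L = p := by
        have : L - k + p + k = p + L := by omega
        rw [this, Nat.add_mod_right, Nat.mod_eq_of_lt (by omega)]
      rw [h3]
      have h4 : L - k + p = p + (L - k) := by omega
      rw [h4, mul_comm]
  · -- disjointness
    rw [Finset.range_eq_Ico]
    exact Finset.Ico_disjoint_Ico_consecutive 0 (L - k) L
end

section
/- Let q be a positive even integer, ξ = e^{2πi/q}, and θ_1, θ_2, θ_3 ∈ {0, 1, …, q-1}. Define f_0 = θ_3, f_1 = (q/2)θ_1 + θ_3, f_2 = (q/2)θ_2 + θ_3, f_3 = (q/2)(1 + θ_1 + θ_2) + θ_3 (the values of the generalized Boolean function f(x_1,x_2) = (q/2)(x_1x_2 + θ_1x_1 + θ_2x_2) + θ_3 at (0,0), (1,0), (0,1), (1,1)), and let v = (ξ^{f_0}, ξ^{f_1}, ξ^{f_2}, ξ^{f_3}). Let E_4 be the 4×4 circulant matrix whose rows are T^1(v),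 T^2(v), T^3(v), T^4(v). Then E_4 · E_4^† = 4 I_4, where † denotes conjugate transpose. In particular, when q = 2 all entries of E_4 lie in {+1, -1} and E_4 · E_4^T = 4 I_4, i.e., E_4 is a circulant Hadamard matrix of order 4. -/
open Matrix

private lemma stmt8_fmk2 (h : 2 < 4) : (⟨2, h⟩ : Fin 4) = 2 := rfl
private lemma stmt8_fmk3 (h : 3 < 4) : (⟨3, h⟩ : Fin 4) = 3 := rfl

private lemma stmt8_aux (z s₁ s₂ : ℂ) (hzc : z * star z = 1)
    (hs₁ : s₁ = 1 ∨ s₁ = -1) (hs₂ : s₂ = 1 ∨ s₂ = -1)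
    (v : Fin 4 → ℂ)
    (hv0 : v 0 = z) (hv1 : v 1 = s₁ * z) (hv2 : v 2 = s₂ * z)
    (hv3 : v 3 = -(s₁ * (s₂ * z)))
    (E₄ : Matrix (Fin 4) (Fin 4) ℂ)
    (hE : E₄ = fun i j => v ⟨(i.1 + 4 - j.1) % 4, Nat.mod_lt _ (by norm_num)⟩) :
    E₄ * E₄ᴴ = (4 : ℂ) • (1 : Matrix (Fin 4) (Fin 4) ℂ) := by
  rcases hs₁ with rfl | rfl <;> rcases hs₂ with rfl | rfl <;>
    · ext i k
      simp only [Matrix.mul_apply, Matrix.conjTranspose_apply]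
      subst hE
      fin_cases i <;> fin_cases k <;>
        simp only [Matrix.mul_apply, Matrix.conjTranspose_apply, Fin.sum_univ_four,
          Matrix.smul_apply, Matrix.one_apply, smul_eq_mul, Fin.isValue,
          Fin.val_zero, Fin.val_one, show ((2:Fin 4):ℕ) = 2 from rfl,
          show ((3:Fin 4):ℕ) = 3 from rfl, Nat.reduceMod, Nat.reduceSub, Nat.reduceAdd,
          Fin.mk_zero, Fin.mk_one, stmt8_fmk2, stmt8_fmk3, hv0, hv1, hv2, hv3,
          star_neg, star_one, one_mul, neg_neg, neg_one_mul, mul_neg,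
          Fin.reduceEq, reduceIte, Fin.zero_eta] <;>
        (first
          | ring1
          | linear_combination (4 : ℂ) * hzc)

/--
Let `q` be a positive even integer, `ξ = e^{2πi/q}`, and
`θ₁, θ₂, θ₃ ∈ {0,…,q-1}`.  With `f₀ = θ₃`, `f₁ = (q/2)θ₁ + θ₃`,
`f₂ = (q/2)θ₂ + θ₃`, `f₃ = (q/2)(1 + θ₁ + θ₂) + θ₃` (the values of
`f(x₁,x₂) = (q/2)(x₁x₂ + θ₁x₁ + θ₂x₂) + θ₃`) and `v = (ξ^{f₀},ξ^{f₁},ξ^{f₂},ξ^{f₃})`,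
let `E₄` be the `4×4` circulant matrix whose `i`-th row is `T^i(v)`, i.e.
`(E₄)_{i j} = v_{(i - j) mod 4}` (0-indexed).  Then `E₄ ⬝ E₄ᴴ = 4 I₄`; in
particular, when `q = 2` all entries of `E₄` lie in `{+1,-1}` and
`E₄ ⬝ E₄ᵀ = 4 I₄`, i.e. `E₄` is a circulant Hadamard matrix of order `4`.
-/
theorem stmt8 (q : ℕ) (hq : 0 < q) (heven : 2 ∣ q)
    (θ₁ θ₂ θ₃ : ℕ) (h₁ : θ₁ ≤ q - 1) (h₂ : θ₂ ≤ q - 1) (h₃ : θ₃ ≤ q - 1) :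
    let ξ : ℂ := Complex.exp (2 * Real.pi * Complex.I / q)
    let f : Fin 4 → ℕ := ![θ₃, q / 2 * θ₁ + θ₃, q / 2 * θ₂ + θ₃,
      q / 2 * (1 + θ₁ + θ₂) + θ₃]
    let v : Fin 4 → ℂ := fun j => ξ ^ (f j)
    let E₄ : Matrix (Fin 4) (Fin 4) ℂ :=
      fun i j => v ⟨(i.1 + 4 - j.1) % 4, Nat.mod_lt _ (by norm_num)⟩
    E₄ * E₄ᴴ = (4 : ℂ) • (1 : Matrix (Fin 4) (Fin 4) ℂ) ∧
      (q = 2 → (∀ i j, E₄ i j = 1 ∨ E₄ i j = -1) ∧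
        E₄ * E₄ᵀ = (4 : ℂ) • (1 : Matrix (Fin 4) (Fin 4) ℂ)) := by
  intro ξ f v E₄
  -- `ξ^(q/2) = -1`
  have hhalf : ξ ^ (q / 2) = -1 := by
    obtain ⟨m, rfl⟩ := heven
    have hm : (m : ℂ) ≠ 0 := by
      have : m ≠ 0 := by omega
      exact_mod_cast this
    rw [show ξ ^ (2 * m / 2) = Complex.exp (↑(2 * m / 2) * (2 * Real.pi * Complex.I / (2 * m))) by
      simp [ξ, ← Complex.exp_nat_mul]]
    rw [show (↑(2 * m / 2) : ℂ) * (2 * Real.pi * Complex.I / (2 * m)) = Real.pi * Complex.I by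
      rw [Nat.mul_div_cancel_left _ (by norm_num)]
      field_simp]
    exact Complex.exp_pi_mul_I
  have hzc : (ξ ^ θ₃) * star (ξ ^ θ₃) = 1 := by
    rw [star_pow, ← mul_pow]
    rw [show star ξ = Complex.exp (-(2 * Real.pi * Complex.I / q)) by
      rw [show (star ξ : ℂ) = (starRingEnd ℂ) ξ from rfl, ← Complex.exp_conj]
      congr 1
      simp [map_div₀, Complex.conj_I, map_ofNat]
      ring]
    rw [← Complex.exp_add, add_neg_cancel, Complex.exp_zero, one_pow]
  have hv0 : v 0 = ξ ^ θ₃ := rfl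
  have hv1 : v 1 = (-1 : ℂ) ^ θ₁ * ξ ^ θ₃ := by
    show ξ ^ (q / 2 * θ₁ + θ₃) = _
    rw [pow_add, pow_mul, hhalf]
  have hv2 : v 2 = (-1 : ℂ) ^ θ₂ * ξ ^ θ₃ := by
    show ξ ^ (q / 2 * θ₂ + θ₃) = _
    rw [pow_add, pow_mul, hhalf]
  have hv3 : v 3 = -((-1 : ℂ) ^ θ₁ * ((-1 : ℂ) ^ θ₂ * ξ ^ θ₃)) := by
    show ξ ^ (q / 2 * (1 + θ₁ + θ₂) + θ₃) = _
    rw [pow_add, pow_mul, hhalf, pow_add, pow_add, pow_one]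
    ring
  have hsgn : ∀ n : ℕ, (-1 : ℂ) ^ n = 1 ∨ (-1 : ℂ) ^ n = -1 := fun n =>
    (Nat.even_or_odd n).imp (fun h => h.neg_one_pow) (fun h => h.neg_one_pow)
  have key : E₄ * E₄ᴴ = (4 : ℂ) • (1 : Matrix (Fin 4) (Fin 4) ℂ) :=
    stmt8_aux (ξ ^ θ₃) ((-1 : ℂ) ^ θ₁) ((-1 : ℂ) ^ θ₂) hzc (hsgn θ₁) (hsgn θ₂)
      v hv0 hv1 hv2 hv3 E₄ rfl
  refine ⟨key, fun hq2 => ?_⟩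
  have hξ : ξ = -1 := by
    have := hhalf
    rw [hq2] at this
    simpa using this
  have hpm : ∀ i j, E₄ i j = 1 ∨ E₄ i j = -1 := by
    intro i j
    show ξ ^ (f _) = 1 ∨ ξ ^ (f _) = -1
    rw [hξ]
    exact hsgn _
  refine ⟨hpm, ?_⟩
  have hT : E₄ᵀ = E₄ᴴ := by
    ext i j
    rw [Matrix.transpose_apply, Matrix.conjTranspose_apply]
    rcases hpm j i with h | h <;> rw [h] <;> simp
  rw [hT]
  exact key
end

section
/- Fix θ_1, θ_2, θ_3 ∈ {0,1} and let E_4 be the 4×4 circulant Hadamard matrix with rows T^1(v), …, T^4(v), where v_j = (-1)^{f_j} and (f_0, f_1, f_2, f_3) = (θ_3, θ_1+θ_3, θ_2+θ_3, 1+θ_1+θ_2+θ_3) mod 2. Recursively define E_{2^{m+1}} = [[E_{2^m}, E_{2^m}], [E_{2^m}, -E_{2^m}]] for 2^m ≥ 4. For n ≥ 1 set E = E_{2^{n+1}} and define F = [[E, E], [E, -E]], G = [[E, E], [-E, E]], H = [[-E, E], [E, E]], I = [[E, -E], [E, E]], each of order 2^{n+2}. Then for every k with 0 ≤ k ≤ 2^{n+1}-2,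 the 2^{n+2} rows of each truncated matrix F^k, G^k, H^k, I^k (last k columns deleted) form a (2^{n+2}, 2^{n+2}-k)-Golay complementary set: the sum over all rows of their aperiodic autocorrelation functions vanishes at every shift λ with 1 ≤ λ ≤ 2^{n+2}-k-1. -/
/-- The length-4 `±1` sequence of the GBF
`f(x₁,x₂) = x₁x₂ + θ₁x₁ + θ₂x₂ + θ₃` over `ℤ₂`:
`(f₀,f₁,f₂,f₃) = (θ₃, θ₁+θ₃, θ₂+θ₃, 1+θ₁+θ₂+θ₃)`, `v_j = (-1)^{f_j}`
(extended 4-periodically to `ℕ`). -/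
noncomputable def gbfV (t₁ t₂ t₃ : ZMod 2) : ℕ → ℝ :=
  fun j => (-1 : ℝ) ^
    (if j % 4 = 0 then t₃ else if j % 4 = 1 then t₁ + t₃
     else if j % 4 = 2 then t₂ + t₃ else 1 + t₁ + t₂ + t₃).val

/-- `Emat t₁ t₂ t₃ m` is the matrix `E_{2^{m+2}}`, given as a function of
(0-indexed) row and column indices.  The base case `E₄` is the circulant
matrix whose `i`-th row is `T^{i+1}(v)`, i.e. `(E₄)_{i j} = v_{(i-j) mod 4}`;
recursively `E_{2L} = [[E_L, E_L], [E_L, -E_L]]`. -/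
noncomputable def Emat (t₁ t₂ t₃ : ZMod 2) : ℕ → ℕ → ℕ → ℝ
  | 0 => fun i j => gbfV t₁ t₂ t₃ ((i % 4 + 4 - j % 4) % 4)
  | (m + 1) => fun i j =>
      (if 2 ^ (m + 2) ≤ i ∧ 2 ^ (m + 2) ≤ j then -1 else 1) *
        Emat t₁ t₂ t₃ m (i % 2 ^ (m + 2)) (j % 2 ^ (m + 2))

/-- The block matrix `[[E, E], [E, -E]]` of order `2·L₀` built from an order-`L₀`
matrix `E`. -/
noncomputable def blockF (E : ℕ → ℕ → ℝ) (L₀ : ℕ) : ℕ → ℕ → ℝ :=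
  fun i j => (if L₀ ≤ i ∧ L₀ ≤ j then -1 else 1) * E (i % L₀) (j % L₀)

/-- The block matrix `[[E, E], [-E, E]]`. -/
noncomputable def blockG (E : ℕ → ℕ → ℝ) (L₀ : ℕ) : ℕ → ℕ → ℝ :=
  fun i j => (if L₀ ≤ i ∧ j < L₀ then -1 else 1) * E (i % L₀) (j % L₀)

/-- The block matrix `[[-E, E], [E, E]]`. -/
noncomputable def blockH (E : ℕ → ℕ → ℝ) (L₀ : ℕ) : ℕ → ℕ → ℝ :=
  fun i j => (if i < L₀ ∧ j < L₀ then -1 else 1) * E (i % L₀) (j % L₀)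

/-- The block matrix `[[E, -E], [E, E]]`. -/
noncomputable def blockI (E : ℕ → ℕ → ℝ) (L₀ : ℕ) : ℕ → ℕ → ℝ :=
  fun i j => (if i < L₀ ∧ L₀ ≤ j then -1 else 1) * E (i % L₀) (j % L₀)

/-- `IsGCS M L a`: the `M` length-`L` sequences `a 0, …, a (M-1)` form an
`(M, L)`-Golay complementary set: the sum of their AACFs vanishes at every
shift `λ` with `1 ≤ λ ≤ L-1`. -/
def IsGCS (M L : ℕ) (a : ℕ → ℕ → ℝ) : Prop :=
  ∀ lam, 1 ≤ lam → lam ≤ L - 1 →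
    ∑ j ∈ Finset.range M, AACF L (a j) lam = 0

lemma sum_ite_lt_range (N M : ℕ) (f : ℕ → ℝ) :
    ∑ j ∈ Finset.range N, (if j < M then f j else 0)
      = ∑ j ∈ Finset.range (min M N), f j := by
  induction N with
  | zero => simp
  | succ n ih =>
    rw [Finset.sum_range_succ, ih]
    rcases lt_or_ge n M with h | h
    · have h1 : min M (n + 1) = min M n + 1 := by omega
      have h2 : min M n = n := by omega
      rw [if_pos h, h1, Finset.sum_range_succ, h2]
    · have h1 : min M (n + 1) = min M n := by omega
      rw [if_neg (by omega), h1, add_zero]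

lemma sum_shift (N L₀ : ℕ) (h : ℕ → ℝ) :
    ∑ j ∈ Finset.range N, (if L₀ ≤ j then h (j - L₀) else 0)
      = ∑ j ∈ Finset.range (N - L₀), h j := by
  induction N with
  | zero => simp
  | succ n ih =>
    rw [Finset.sum_range_succ, ih]
    rcases le_or_gt L₀ n with h1 | h1
    · rw [if_pos h1, Nat.succ_sub h1, Finset.sum_range_succ]
    · rw [if_neg (by omega)]
      have e1 : n + 1 - L₀ = 0 := by omega
      have e2 : n - L₀ = 0 := by omega
      rw [e1, e2, add_zero]

lemma block_step (L₀ : ℕ) (E E' : ℕ → ℕ → ℝ) (p q r s : ℝ)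
    (hp : p * p = 1) (hq : q * q = 1) (hr : r * r = 1) (hs : s * s = 1)
    (hcross : p * q + r * s = 0)
    (hE' : ∀ i j, E' i j =
      (if i < L₀ then (if j < L₀ then p else q) else (if j < L₀ then r else s))
        * E (i % L₀) (j % L₀))
    (hE : ∀ L' ≤ L₀, ∀ lam, 1 ≤ lam →
      ∑ i ∈ Finset.range L₀, AACF L' (E i) lam = 0) :
    ∀ L' ≤ 2 * L₀, ∀ lam, 1 ≤ lam →
      ∑ i ∈ Finset.range (2 * L₀), AACF L' (E' i) lam = 0 := by
  intro L' hL' lam hlam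
  have key : ∀ i ∈ Finset.range L₀, AACF L' (E' i) lam + AACF L' (E' (L₀ + i)) lam
      = 2 * AACF (min L' L₀) (E i) lam + 2 * AACF (L' - L₀) (E i) lam := by
    intro i hi
    rw [Finset.mem_range] at hi
    unfold AACF ACCF
    rw [← Finset.sum_add_distrib]
    have step : ∀ j ∈ Finset.range (L' - lam),
        E' i j * E' i (j + lam) + E' (L₀ + i) j * E' (L₀ + i) (j + lam)
          = 2 * (if j + lam < L₀ then E i j * E i (j + lam) else 0)
            + 2 * (if L₀ ≤ j then E i (j - L₀) * E i (j - L₀ + lam) else 0) := by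
      intro j hj
      rw [Finset.mem_range] at hj
      have hjl : j + lam < L' := by omega
      have hj2 : j + lam < 2 * L₀ := by omega
      have him : i % L₀ = i := Nat.mod_eq_of_lt hi
      have him2 : (L₀ + i) % L₀ = i := by rw [Nat.add_mod_left, him]
      have hni : ¬ L₀ + i < L₀ := by omega
      simp only [hE', him, him2, if_pos hi, if_neg hni]
      rcases lt_or_ge (j + lam) L₀ with h1 | h1
      · have e1 : j % L₀ = j := Nat.mod_eq_of_lt (by omega)
        have e2 : (j + lam) % L₀ = j + lam := Nat.mod_eq_of_lt h1
        simp only [e1, e2, if_pos (by omega : j < L₀), if_pos h1,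
          if_neg (by omega : ¬ L₀ ≤ j)]
        linear_combination (E i j * E i (j + lam)) * hp + (E i j * E i (j + lam)) * hr
      · rcases lt_or_ge j L₀ with h2 | h2
        · simp only [if_pos h2, if_neg (by omega : ¬ j + lam < L₀),
            if_neg (by omega : ¬ L₀ ≤ j)]
          linear_combination (E i (j % L₀) * E i ((j + lam) % L₀)) * hcross
        · have e1 : j % L₀ = j - L₀ := by
            rw [Nat.mod_eq_sub_mod h2, Nat.mod_eq_of_lt (by omega)]
          have e2 : (j + lam) % L₀ = j - L₀ + lam := by
            rw [Nat.mod_eq_sub_mod (by omega), Nat.mod_eq_of_lt (by omega)]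
            omega
          simp only [e1, e2, if_neg (by omega : ¬ j < L₀),
            if_neg (by omega : ¬ j + lam < L₀), if_pos h2]
          linear_combination (E i (j - L₀) * E i (j - L₀ + lam)) * hq
            + (E i (j - L₀) * E i (j - L₀ + lam)) * hs
    rw [Finset.sum_congr rfl step, Finset.sum_add_distrib, ← Finset.mul_sum, ← Finset.mul_sum]
    have c1 : ∀ j, (j + lam < L₀) = (j < L₀ - lam) := by
      intro j; apply propext; constructor <;> intro <;> omega
    simp only [c1]
    rw [sum_ite_lt_range, sum_shift (L' - lam) L₀ (fun x => E i x * E i (x + lam))]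
    have e1 : min (L₀ - lam) (L' - lam) = min L' L₀ - lam := by omega
    have e2 : L' - lam - L₀ = L' - L₀ - lam := by omega
    rw [e1, e2]
  calc ∑ i ∈ Finset.range (2 * L₀), AACF L' (E' i) lam
      = ∑ i ∈ Finset.range L₀, (AACF L' (E' i) lam + AACF L' (E' (L₀ + i)) lam) := by
        rw [two_mul, Finset.sum_range_add, Finset.sum_add_distrib]
    _ = ∑ i ∈ Finset.range L₀, (2 * AACF (min L' L₀) (E i) lam
          + 2 * AACF (L' - L₀) (E i) lam) := Finset.sum_congr rfl key
    _ = 2 * ∑ i ∈ Finset.range L₀, AACF (min L' L₀) (E i) lam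
          + 2 * ∑ i ∈ Finset.range L₀, AACF (L' - L₀) (E i) lam := by
        rw [Finset.sum_add_distrib, Finset.mul_sum, Finset.mul_sum]
    _ = 0 := by
        rw [hE (min L' L₀) (min_le_right _ _) lam hlam,
          hE (L' - L₀) (by omega) lam hlam]
        ring

lemma zv0 : (0 : ZMod 2).val = 0 := rfl
lemma zv1 : (1 : ZMod 2).val = 1 := rfl
lemma zv2 : (2 : ZMod 2).val = 0 := rfl
lemma zv3 : (3 : ZMod 2).val = 1 := rfl
lemma zv4 : (4 : ZMod 2).val = 0 := rfl

lemma zmod2_cases (t : ZMod 2) : t = 0 ∨ t = 1 := by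
  fin_cases t
  · exact Or.inl rfl
  · exact Or.inr rfl

set_option maxHeartbeats 2000000 in
lemma base_gcs (t₁ t₂ t₃ : ZMod 2) :
    ∀ L' ≤ 4, ∀ lam, 1 ≤ lam →
      ∑ i ∈ Finset.range 4, AACF L' (Emat t₁ t₂ t₃ 0 i) lam = 0 := by
  intro L' hL' lam hlam
  rcases le_or_gt L' lam with h | h
  · simp [AACF, ACCF, Nat.sub_eq_zero_of_le h]
  · interval_cases L' <;> interval_cases lam <;>
      rcases zmod2_cases t₁ with rfl | rfl <;> rcases zmod2_cases t₂ with rfl | rfl <;>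
      rcases zmod2_cases t₃ with rfl | rfl <;>
      norm_num [AACF, ACCF, Emat, gbfV, Finset.sum_range_succ, zv0, zv1, zv2, zv3, zv4]


lemma base_and_ind (t₁ t₂ t₃ : ZMod 2) (m : ℕ) :
    ∀ L' ≤ 2 ^ (m + 2), ∀ lam, 1 ≤ lam →
      ∑ i ∈ Finset.range (2 ^ (m + 2)), AACF L' (Emat t₁ t₂ t₃ m i) lam = 0 := by
  induction m with
  | zero => exact base_gcs t₁ t₂ t₃
  | succ m ih =>
    have h2 : (2 : ℕ) ^ (m + 1 + 2) = 2 * 2 ^ (m + 2) := by ring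
    intro L' hL' lam hlam
    rw [h2] at hL' ⊢
    refine block_step (2 ^ (m + 2)) (Emat t₁ t₂ t₃ m) (Emat t₁ t₂ t₃ (m + 1))
      1 1 1 (-1) (by norm_num) (by norm_num) (by norm_num) (by norm_num) (by norm_num)
      (fun i j => by
        show (if 2 ^ (m+2) ≤ i ∧ 2 ^ (m+2) ≤ j then (-1:ℝ) else 1) * _ = _
        congr 1
        split_ifs <;> first | rfl | omega) ih L' hL' lam hlam

/--
Fix `θ₁, θ₂, θ₃ ∈ ℤ₂` and build `E₄` from the GBF, then
recursively `E_{2^{m+1}} = [[E_{2^m}, E_{2^m}], [E_{2^m}, -E_{2^m}]]`.  For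
`n ≥ 1` let `E = E_{2^{n+1}}` and form `F = [[E,E],[E,-E]]`,
`G = [[E,E],[-E,E]]`, `H = [[-E,E],[E,E]]`, `I = [[E,-E],[E,E]]` of order
`2^{n+2}`.  Then for every `0 ≤ k ≤ 2^{n+1} - 2`, the `2^{n+2}` rows of each
truncated matrix `F^k, G^k, H^k, I^k` (last `k` columns deleted) form a
`(2^{n+2}, 2^{n+2}-k)`-Golay complementary set.
-/
theorem stmt11 (t₁ t₂ t₃ : ZMod 2) (n k : ℕ) (hn : 1 ≤ n)
    (hk : k ≤ 2 ^ (n + 1) - 2) :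
    IsGCS (2 ^ (n + 2)) (2 ^ (n + 2) - k)
        (blockF (Emat t₁ t₂ t₃ (n - 1)) (2 ^ (n + 1))) ∧
    IsGCS (2 ^ (n + 2)) (2 ^ (n + 2) - k)
        (blockG (Emat t₁ t₂ t₃ (n - 1)) (2 ^ (n + 1))) ∧
    IsGCS (2 ^ (n + 2)) (2 ^ (n + 2) - k)
        (blockH (Emat t₁ t₂ t₃ (n - 1)) (2 ^ (n + 1))) ∧
    IsGCS (2 ^ (n + 2)) (2 ^ (n + 2) - k)
        (blockI (Emat t₁ t₂ t₃ (n - 1)) (2 ^ (n + 1))) := by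

  have e12 : n - 1 + 2 = n + 1 := by omega
  have hE := base_and_ind t₁ t₂ t₃ (n - 1)
  rw [e12] at hE
  have h2 : (2 : ℕ) ^ (n + 2) = 2 * 2 ^ (n + 1) := by ring
  have hL : 2 * 2 ^ (n + 1) - k ≤ 2 * 2 ^ (n + 1) := Nat.sub_le _ _
  have hone : (1 : ℝ) * 1 = 1 := by norm_num
  have hmone : (-1 : ℝ) * -1 = 1 := by norm_num
  refine ⟨?_, ?_, ?_, ?_⟩ <;> intro lam hlam _ <;> rw [h2]
  · exact block_step (2 ^ (n + 1)) (Emat t₁ t₂ t₃ (n - 1)) (blockF (Emat t₁ t₂ t₃ (n - 1)) (2 ^ (n + 1))) 1 1 1 (-1) hone hone hone hmone (by norm_num)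
      (fun i j => by
        show (if 2 ^ (n+1) ≤ i ∧ 2 ^ (n+1) ≤ j then (-1:ℝ) else 1) * _ = _
        congr 1
        split_ifs <;> first | rfl | omega) hE (2 * 2 ^ (n + 1) - k) hL lam hlam
  · exact block_step (2 ^ (n + 1)) (Emat t₁ t₂ t₃ (n - 1)) (blockG (Emat t₁ t₂ t₃ (n - 1)) (2 ^ (n + 1))) 1 1 (-1) 1 hone hone hmone hone (by norm_num)
      (fun i j => by
        show (if 2 ^ (n+1) ≤ i ∧ j < 2 ^ (n+1) then (-1:ℝ) else 1) * _ = _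
        congr 1
        split_ifs <;> first | rfl | omega) hE (2 * 2 ^ (n + 1) - k) hL lam hlam
  · exact block_step (2 ^ (n + 1)) (Emat t₁ t₂ t₃ (n - 1)) (blockH (Emat t₁ t₂ t₃ (n - 1)) (2 ^ (n + 1))) (-1) 1 1 1 hmone hone hone hone (by norm_num)
      (fun i j => by
        show (if i < 2 ^ (n+1) ∧ j < 2 ^ (n+1) then (-1:ℝ) else 1) * _ = _
        congr 1
        split_ifs <;> first | rfl | omega) hE (2 * 2 ^ (n + 1) - k) hL lam hlam
  · exact block_step (2 ^ (n + 1)) (Emat t₁ t₂ t₃ (n - 1)) (blockI (Emat t₁ t₂ t₃ (n - 1)) (2 ^ (n + 1))) 1 (-1) 1 1 hone hmone hone hone (by norm_num)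
      (fun i j => by
        show (if i < 2 ^ (n+1) ∧ 2 ^ (n+1) ≤ j then (-1:ℝ) else 1) * _ = _
        congr 1
        split_ifs <;> first | rfl | omega) hE (2 * 2 ^ (n + 1) - k) hL lam hlam
end

section
/- Let (a, b) be a Golay complementary pair of {+1,-1}-valued sequences of length N ≥ 2, and define sequences c and d of length N by c_i = b_{N-1-i} and d_i = -a_{N-1-i} for 0 ≤ i ≤ N-1 (so that (c,d) is a complementary mate of (a,b)). Let G be the 2N × 2N matrix whose rows are R_i = (T^i(a), T^i(b)) for 1 ≤ i ≤ N and R_{N+i} = (T^i(c), T^i(d)) for 1 ≤ i ≤ N, i.e., G = [[Cir(a), Cir(b)], [Cir(c), Cir(d)]]. Then for every k with 0 ≤ k ≤ 2N-2, the 2N rows of the truncated matrix G^k (last k columns deleted) form a (2N, 2N-k)-Golay complementary set: Σ_{i=1}^{2N} A(R_i^{2N-k})(λ) = 0 for all 1 ≤ λ ≤ 2N-k-1. -/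
/-- `Tsh N v k m` is the `m`-th entry of the cyclic shift `T^k(v)` of a
length-`N` sequence `v`, namely `v_{(k-1-m) mod N}`. -/
noncomputable def Tsh (N : ℕ) (v : ℕ → ℝ) (k m : ℕ) : ℝ :=
  v ((k - 1 + N - m) % N)

/-- The (0-indexed) `r`-th row of the `2N × 2N` matrix
`G = [[Cir(a), Cir(b)], [Cir(c), Cir(d)]]`: for `0 ≤ r < N` it is
`(T^{r+1}(a), T^{r+1}(b))`, and for `N ≤ r < 2N` it is
`(T^{r-N+1}(c), T^{r-N+1}(d))`. -/
noncomputable def Grow (N : ℕ) (a b c d : ℕ → ℝ) (r m : ℕ) : ℝ :=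
  if r < N then
    (if m < N then Tsh N a (r + 1) m else Tsh N b (r + 1) (m - N))
  else
    (if m < N then Tsh N c (r - N + 1) m else Tsh N d (r - N + 1) (m - N))

/-- Shift inner product: reindexing a cyclic-shift correlation sum. -/
private lemma SIP (N : ℕ) (u v : ℕ → ℝ) (m₁ m₂ : ℕ) (h1 : m₁ < N) (h2 : m₂ < N) :
    ∑ r ∈ Finset.range N, u ((r + N - m₁) % N) * v ((r + N - m₂) % N)
      = ∑ j ∈ Finset.range N, u j * v ((j + (N + m₁ - m₂) % N) % N) := by
  have hN : 0 < N := by omega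
  refine Finset.sum_nbij' (fun r => (r + N - m₁) % N) (fun s => (s + m₁) % N)
    (fun r hr => Finset.mem_range.mpr (Nat.mod_lt _ hN))
    (fun s hs => Finset.mem_range.mpr (Nat.mod_lt _ hN)) ?_ ?_ ?_
  · intro r hr
    have hrN := Finset.mem_range.mp hr
    show ((r + N - m₁) % N + m₁) % N = r
    rw [Nat.mod_add_mod]
    have h3 : r + N - m₁ + m₁ = r + N := by omega
    rw [h3, Nat.add_mod_right, Nat.mod_eq_of_lt hrN]
  · intro s hs
    have hsN := Finset.mem_range.mp hs
    show ((s + m₁) % N + N - m₁) % N = s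
    have h3 : (s + m₁) % N + N - m₁ = (s + m₁) % N + (N - m₁) := by omega
    rw [h3, Nat.mod_add_mod]
    have h4 : s + m₁ + (N - m₁) = s + N := by omega
    rw [h4, Nat.add_mod_right, Nat.mod_eq_of_lt hsN]
  · intro r hr
    show u ((r + N - m₁) % N) * v ((r + N - m₂) % N)
      = u ((r + N - m₁) % N) * v (((r + N - m₁) % N + (N + m₁ - m₂) % N) % N)
    have hidx : (r + N - m₂) % N = ((r + N - m₁) % N + (N + m₁ - m₂) % N) % N := by
      rw [Nat.mod_add_mod, Nat.add_mod_mod]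
      have h3 : r + N - m₁ + (N + m₁ - m₂) = (r + N - m₂) + N := by omega
      rw [h3, Nat.add_mod_right]
    rw [hidx]

private lemma mod_rev (N : ℕ) (hN : 0 < N) (x δ : ℕ) (hx : x < N) :
    (N - 1 - (x + δ) % N + δ) % N = N - 1 - x := by
  have hm : (x + δ) % N < N := Nat.mod_lt _ hN
  obtain ⟨q, hq⟩ : ∃ q, (x + δ) % N + N * q = x + δ := ⟨(x + δ) / N, Nat.mod_add_div _ _⟩
  have h2 : N - 1 - (x + δ) % N + δ = (N - 1 - x) + N * q := by omega
  rw [h2, Nat.add_mul_mod_self_left, Nat.mod_eq_of_lt (by omega)]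

/-- Periodic correlation of reversed sequences. -/
private lemma P_rev (N : ℕ) (hN : 0 < N) (u v : ℕ → ℝ) (δ : ℕ) :
    ∑ j ∈ Finset.range N, u (N - 1 - j) * v (N - 1 - (j + δ) % N)
      = ∑ i ∈ Finset.range N, v i * u ((i + δ) % N) := by
  refine Finset.sum_nbij' (fun j => N - 1 - (j + δ) % N) (fun i => N - 1 - (i + δ) % N)
    (fun j hj => Finset.mem_range.mpr (show N - 1 - (j + δ) % N < N by omega))
    (fun i hi => Finset.mem_range.mpr (show N - 1 - (i + δ) % N < N by omega)) ?_ ?_ ?_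
  · intro j hj
    have hjN := Finset.mem_range.mp hj
    show N - 1 - ((N - 1 - (j + δ) % N) + δ) % N = j
    rw [mod_rev N hN j δ hjN]
    omega
  · intro i hi
    have hiN := Finset.mem_range.mp hi
    show N - 1 - ((N - 1 - (i + δ) % N) + δ) % N = i
    rw [mod_rev N hN i δ hiN]
    omega
  · intro j hj
    have hjN := Finset.mem_range.mp hj
    show u (N - 1 - j) * v (N - 1 - (j + δ) % N)
      = v (N - 1 - (j + δ) % N) * u ((N - 1 - (j + δ) % N + δ) % N)
    rw [mod_rev N hN j δ hjN, mul_comm]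

/-- Split a periodic autocorrelation into two aperiodic ones. -/
private lemma P_split (N : ℕ) (u : ℕ → ℝ) (δ : ℕ) (h1 : 1 ≤ δ) (h2 : δ < N) :
    ∑ j ∈ Finset.range N, u j * u ((j + δ) % N) = AACF N u δ + AACF N u (N - δ) := by
  have key := Finset.sum_range_add (fun j => u j * u ((j + δ) % N)) (N - δ) δ
  rw [Nat.sub_add_cancel h2.le] at key
  rw [key]
  congr 1
  · unfold AACF ACCF
    refine Finset.sum_congr rfl fun j hj => ?_
    have hjN := Finset.mem_range.mp hj
    rw [Nat.mod_eq_of_lt (by omega)]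
  · unfold AACF ACCF
    have hδ : N - (N - δ) = δ := by omega
    rw [hδ]
    refine Finset.sum_congr rfl fun x hx => ?_
    have hxδ := Finset.mem_range.mp hx
    have h3 : N - δ + x + δ = N + x := by omega
    have h4 : N - δ + x = x + (N - δ) := by omega
    rw [h3, Nat.add_mod_left, Nat.mod_eq_of_lt (by omega), h4, mul_comm]

private lemma case_same (N : ℕ) (hN : 2 ≤ N) (u w : ℕ → ℝ)
    (hGCP : ∀ lam, 1 ≤ lam → lam ≤ N - 1 → AACF N u lam + AACF N w lam = 0)
    (m m' : ℕ) (hm : m < N) (hm' : m' < N) (hne : m ≠ m') :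
    (∑ r ∈ Finset.range N, u ((r + N - m) % N) * u ((r + N - m') % N))
      + ∑ r ∈ Finset.range N, w (N - 1 - (r + N - m) % N) * w (N - 1 - (r + N - m') % N)
      = 0 := by
  have hN0 : 0 < N := by omega
  have hδlt : (N + m - m') % N < N := Nat.mod_lt _ hN0
  have hδpos : (N + m - m') % N ≠ 0 := by
    rcases Nat.lt_or_ge m m' with h | h
    · have h1 : N + m - m' < N := by omega
      rw [Nat.mod_eq_of_lt h1]; omega
    · have h1 : N + m - m' = N + (m - m') := by omega
      rw [h1, Nat.add_mod_left, Nat.mod_eq_of_lt (by omega)]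
      omega
  have e1 : (∑ r ∈ Finset.range N, u ((r + N - m) % N) * u ((r + N - m') % N))
      = AACF N u ((N + m - m') % N) + AACF N u (N - (N + m - m') % N) :=
    (SIP N u u m m' hm hm').trans (P_split N u _ (by omega) hδlt)
  have e2 : (∑ r ∈ Finset.range N, w (N - 1 - (r + N - m) % N) * w (N - 1 - (r + N - m') % N))
      = AACF N w ((N + m - m') % N) + AACF N w (N - (N + m - m') % N) :=
    ((SIP N (fun x => w (N - 1 - x)) (fun x => w (N - 1 - x)) m m' hm hm').trans
      (P_rev N hN0 w w _)).trans (P_split N w _ (by omega) hδlt)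
  rw [e1, e2]
  have g1 := hGCP ((N + m - m') % N) (by omega) (by omega)
  have g2 := hGCP (N - (N + m - m') % N) (by omega) (by omega)
  linarith

private lemma case_cross (N : ℕ) (hN0 : 0 < N) (u w : ℕ → ℝ) (m m' : ℕ)
    (hm : m < N) (hm' : m' < N) :
    (∑ r ∈ Finset.range N, u ((r + N - m) % N) * w ((r + N - m') % N))
      + ∑ r ∈ Finset.range N, w (N - 1 - (r + N - m) % N) * -u (N - 1 - (r + N - m') % N)
      = 0 := by
  have e1 := SIP N u w m m' hm hm'
  have e2 : (∑ r ∈ Finset.range N, w (N - 1 - (r + N - m) % N) * u (N - 1 - (r + N - m') % N))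
      = ∑ j ∈ Finset.range N, u j * w ((j + (N + m - m') % N) % N) :=
    (SIP N (fun x => w (N - 1 - x)) (fun x => u (N - 1 - x)) m m' hm hm').trans
      (P_rev N hN0 w u _)
  have e3 : (∑ r ∈ Finset.range N, w (N - 1 - (r + N - m) % N) * -u (N - 1 - (r + N - m') % N))
      = -∑ r ∈ Finset.range N, w (N - 1 - (r + N - m) % N) * u (N - 1 - (r + N - m') % N) := by
    rw [← Finset.sum_neg_distrib]
    exact Finset.sum_congr rfl fun r _ => by ring
  rw [e1, e3, e2]
  ring

private lemma case_cross' (N : ℕ) (hN0 : 0 < N) (u w : ℕ → ℝ) (m m' : ℕ)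
    (hm : m < N) (hm' : m' < N) :
    (∑ r ∈ Finset.range N, w ((r + N - m) % N) * u ((r + N - m') % N))
      + ∑ r ∈ Finset.range N, -u (N - 1 - (r + N - m) % N) * w (N - 1 - (r + N - m') % N)
      = 0 := by
  have e1 := SIP N w u m m' hm hm'
  have e2 : (∑ r ∈ Finset.range N, u (N - 1 - (r + N - m) % N) * w (N - 1 - (r + N - m') % N))
      = ∑ j ∈ Finset.range N, w j * u ((j + (N + m - m') % N) % N) :=
    (SIP N (fun x => u (N - 1 - x)) (fun x => w (N - 1 - x)) m m' hm hm').trans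
      (P_rev N hN0 u w _)
  have e3 : (∑ r ∈ Finset.range N, -u (N - 1 - (r + N - m) % N) * w (N - 1 - (r + N - m') % N))
      = -∑ r ∈ Finset.range N, u (N - 1 - (r + N - m) % N) * w (N - 1 - (r + N - m') % N) := by
    rw [← Finset.sum_neg_distrib]
    exact Finset.sum_congr rfl fun r _ => by ring
  rw [e1, e3, e2]
  ring

private lemma colOrth (N : ℕ) (hN : 2 ≤ N) (a b : ℕ → ℝ)
    (hGCP : ∀ lam, 1 ≤ lam → lam ≤ N - 1 → AACF N a lam + AACF N b lam = 0)
    (m m' : ℕ) (hm : m < 2 * N) (hm' : m' < 2 * N) (hne : m ≠ m') :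
    ∑ r ∈ Finset.range (2 * N),
      Grow N a b (fun i => b (N - 1 - i)) (fun i => -a (N - 1 - i)) r m *
      Grow N a b (fun i => b (N - 1 - i)) (fun i => -a (N - 1 - i)) r m' = 0 := by
  have hN0 : 0 < N := by omega
  set G := Grow N a b (fun i => b (N - 1 - i)) (fun i => -a (N - 1 - i)) with hG
  have hGt : ∀ r, r < N → ∀ mm,
      G r mm = if mm < N then a ((r + N - mm) % N) else b ((r + N - (mm - N)) % N) := by
    intro r hr mm
    simp only [hG, Grow, if_pos hr, Tsh, Nat.add_sub_cancel]
  have hGb : ∀ r, r < N → ∀ mm,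
      G (N + r) mm = if mm < N then b (N - 1 - (r + N - mm) % N)
        else -a (N - 1 - (r + N - (mm - N)) % N) := by
    intro r hr mm
    have hnr : ¬ (N + r < N) := by omega
    simp only [hG, Grow, if_neg hnr, Tsh, Nat.add_sub_cancel_left, Nat.add_sub_cancel]
  rw [two_mul, Finset.sum_range_add]
  rcases Nat.lt_or_ge m N with hmN | hmN <;> rcases Nat.lt_or_ge m' N with hm'N | hm'N
  · have ht : ∑ r ∈ Finset.range N, G r m * G r m'
        = ∑ r ∈ Finset.range N, a ((r + N - m) % N) * a ((r + N - m') % N) :=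
      Finset.sum_congr rfl fun r hr => by
        rw [hGt r (Finset.mem_range.mp hr) m, hGt r (Finset.mem_range.mp hr) m',
          if_pos hmN, if_pos hm'N]
    have hb2 : ∑ r ∈ Finset.range N, G (N + r) m * G (N + r) m'
        = ∑ r ∈ Finset.range N,
            b (N - 1 - (r + N - m) % N) * b (N - 1 - (r + N - m') % N) :=
      Finset.sum_congr rfl fun r hr => by
        rw [hGb r (Finset.mem_range.mp hr) m, hGb r (Finset.mem_range.mp hr) m',
          if_pos hmN, if_pos hm'N]
    rw [ht, hb2]
    exact case_same N hN a b hGCP m m' hmN hm'N hne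
  · have ht : ∑ r ∈ Finset.range N, G r m * G r m'
        = ∑ r ∈ Finset.range N, a ((r + N - m) % N) * b ((r + N - (m' - N)) % N) :=
      Finset.sum_congr rfl fun r hr => by
        rw [hGt r (Finset.mem_range.mp hr) m, hGt r (Finset.mem_range.mp hr) m',
          if_pos hmN, if_neg (by omega)]
    have hb2 : ∑ r ∈ Finset.range N, G (N + r) m * G (N + r) m'
        = ∑ r ∈ Finset.range N,
            b (N - 1 - (r + N - m) % N) * -a (N - 1 - (r + N - (m' - N)) % N) :=
      Finset.sum_congr rfl fun r hr => by
        rw [hGb r (Finset.mem_range.mp hr) m, hGb r (Finset.mem_range.mp hr) m',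
          if_pos hmN, if_neg (by omega)]
    rw [ht, hb2]
    exact case_cross N hN0 a b m (m' - N) hmN (by omega)
  · have ht : ∑ r ∈ Finset.range N, G r m * G r m'
        = ∑ r ∈ Finset.range N, b ((r + N - (m - N)) % N) * a ((r + N - m') % N) :=
      Finset.sum_congr rfl fun r hr => by
        rw [hGt r (Finset.mem_range.mp hr) m, hGt r (Finset.mem_range.mp hr) m',
          if_neg (by omega), if_pos hm'N]
    have hb2 : ∑ r ∈ Finset.range N, G (N + r) m * G (N + r) m'
        = ∑ r ∈ Finset.range N,
            -a (N - 1 - (r + N - (m - N)) % N) * b (N - 1 - (r + N - m') % N) :=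
      Finset.sum_congr rfl fun r hr => by
        rw [hGb r (Finset.mem_range.mp hr) m, hGb r (Finset.mem_range.mp hr) m',
          if_neg (by omega), if_pos hm'N]
    rw [ht, hb2]
    exact case_cross' N hN0 a b (m - N) m' (by omega) hm'N
  · have ht : ∑ r ∈ Finset.range N, G r m * G r m'
        = ∑ r ∈ Finset.range N, b ((r + N - (m - N)) % N) * b ((r + N - (m' - N)) % N) :=
      Finset.sum_congr rfl fun r hr => by
        rw [hGt r (Finset.mem_range.mp hr) m, hGt r (Finset.mem_range.mp hr) m',
          if_neg (by omega), if_neg (by omega)]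
    have hb2 : ∑ r ∈ Finset.range N, G (N + r) m * G (N + r) m'
        = ∑ r ∈ Finset.range N,
            a (N - 1 - (r + N - (m - N)) % N) * a (N - 1 - (r + N - (m' - N)) % N) :=
      Finset.sum_congr rfl fun r hr => by
        rw [hGb r (Finset.mem_range.mp hr) m, hGb r (Finset.mem_range.mp hr) m',
          if_neg (by omega), if_neg (by omega)]
        ring
    rw [ht, hb2]
    exact case_same N hN b a
      (fun lam h1 h2 => by have := hGCP lam h1 h2; linarith)
      (m - N) (m' - N) (by omega) (by omega) (by omega)

/--
Let `(a, b)` be a Golay complementary pair of `±1` sequences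
of length `N ≥ 2` and set `c_i = b_{N-1-i}`, `d_i = -a_{N-1-i}` (a
complementary mate of `(a,b)`).  Let `G = [[Cir(a), Cir(b)], [Cir(c), Cir(d)]]`
with rows `R_1, …, R_{2N}`.  Then for every `0 ≤ k ≤ 2N-2`, the `2N` rows of
the truncated matrix `G^k` (last `k` columns deleted, rows of length `2N-k`)
form a `(2N, 2N-k)`-Golay complementary set:
`Σ_{r} A(R_r^{2N-k})(λ) = 0` for all `1 ≤ λ ≤ 2N-k-1`.
-/
theorem stmt12 (N : ℕ) (hN : 2 ≤ N) (a b : ℕ → ℝ)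
    (ha : ∀ i < N, a i = 1 ∨ a i = -1) (hb : ∀ i < N, b i = 1 ∨ b i = -1)
    (hGCP : ∀ lam, 1 ≤ lam → lam ≤ N - 1 → AACF N a lam + AACF N b lam = 0)
    (k : ℕ) (hk : k ≤ 2 * N - 2) :
    ∀ lam, 1 ≤ lam → lam ≤ 2 * N - k - 1 →
      ∑ r ∈ Finset.range (2 * N),
        AACF (2 * N - k)
          (Grow N a b (fun i => b (N - 1 - i)) (fun i => -a (N - 1 - i)) r)
          lam = 0 := by
  intro lam hlam1 hlam2
  unfold AACF ACCF
  rw [Finset.sum_comm]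
  refine Finset.sum_eq_zero fun m hm => ?_
  have hmr := Finset.mem_range.mp hm
  exact colOrth N hN a b hGCP m (m + lam) (by omega) (by omega) (by omega)
end

section
/- Let (a, b) be a Golay complementary pair of {+1,-1}-valued sequences of length N ≥ 2, and define c and d of length N by c_i = b_{N-1-i} and d_i = -a_{N-1-i}. Let G = [[Cir(a), Cir(b)], [Cir(c), Cir(d)]] be the 2N × 2N matrix whose rows are (T^i(a), T^i(b)) for 1 ≤ i ≤ N and (T^i(c), T^i(d)) for 1 ≤ i ≤ N. Then G · G^T = 2N · I_{2N}; that is, G is a Hadamard matrix of order 2N. -/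
open Matrix

/-! ### Auxiliary machinery: periodic correlations over `ZMod N` -/

/-- Periodic cross-correlation over `ZMod N`. -/
noncomputable def Pc (N : ℕ) [NeZero N] (V W : ZMod N → ℝ) (δ : ZMod N) : ℝ :=
  ∑ y : ZMod N, V y * W (y + δ)

lemma sum_zmod (N : ℕ) [NeZero N] (f : ℕ → ℝ) :
    ∑ y : ZMod N, f y.val = ∑ t ∈ Finset.range N, f t := by
  refine Finset.sum_nbij' (fun y => y.val) (fun t => ((t : ℕ) : ZMod N)) ?_ ?_ ?_ ?_ ?_
  · intro y _; exact Finset.mem_range.2 (ZMod.val_lt y)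
  · intro t _; exact Finset.mem_univ _
  · intro y _; exact ZMod.natCast_zmod_val y
  · intro t ht; exact ZMod.val_cast_of_lt (Finset.mem_range.1 ht)
  · intro y _; rfl

lemma pc_symm (N : ℕ) [NeZero N] (V W : ZMod N → ℝ) (δ : ZMod N) :
    Pc N V W δ = Pc N W V (-δ) := by
  unfold Pc
  apply Fintype.sum_equiv (Equiv.addRight δ) _ _ (fun x => ?_)
  simp only [Equiv.coe_addRight]
  have h : x + δ + -δ = x := by ring
  rw [h]; ring

lemma pc_rev (N : ℕ) [NeZero N] (B : ZMod N → ℝ) (δ : ZMod N) :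
    Pc N (fun y => B (-1 - y)) (fun y => B (-1 - y)) δ = Pc N B B δ := by
  unfold Pc
  apply Fintype.sum_equiv (Equiv.subLeft (-1 - δ)) _ _ (fun x => ?_)
  simp only [Equiv.subLeft_apply]
  have h1 : (-1 : ZMod N) - (x + δ) = -1 - δ - x := by ring
  have h2 : (-1 : ZMod N) - δ - x + δ = -1 - x := by ring
  rw [h1, h2]; ring

lemma pc_cross (N : ℕ) [NeZero N] (A B : ZMod N → ℝ) (δ : ZMod N) :
    Pc N A (fun y => B (-1 - y)) δ + Pc N B (fun y => -A (-1 - y)) δ = 0 := by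
  have h2 : Pc N B (fun y => -A (-1 - y)) δ
      = ∑ x : ZMod N, -(A x * B (-1 - (x + δ))) := by
    unfold Pc
    apply Fintype.sum_equiv (Equiv.subLeft (-1 - δ)) _ _ (fun y => ?_)
    simp only [Equiv.subLeft_apply]
    have h1 : (-1 : ZMod N) - (y + δ) = -1 - δ - y := by ring
    have h3 : (-1 : ZMod N) - (-1 - δ - y + δ) = y := by ring
    rw [h1, h3]; ring
  rw [h2]
  unfold Pc
  rw [← Finset.sum_add_distrib]
  apply Finset.sum_eq_zero
  intro y _
  simp

lemma pc_neg (N : ℕ) [NeZero N] (X : ZMod N → ℝ) (δ : ZMod N) :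
    Pc N (fun y => -X y) (fun y => -X y) δ = Pc N X X δ := by
  unfold Pc; simp

lemma pc_val (N : ℕ) [NeZero N] (v : ℕ → ℝ) (δ : ZMod N) :
    Pc N (fun y => v y.val) (fun y => v y.val) δ
      = AACF N v δ.val + AACF N v (N - δ.val) := by
  set d := δ.val with hd
  have hdN : d < N := ZMod.val_lt δ
  have step1 : Pc N (fun y => v y.val) (fun y => v y.val) δ
      = ∑ t ∈ Finset.range N, v t * v ((t + d) % N) := by
    rw [← sum_zmod N (fun t => v t * v ((t + d) % N))]
    unfold Pc
    apply Finset.sum_congr rfl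
    intro y _
    show v y.val * v ((y + δ).val) = v y.val * v ((y.val + d) % N)
    rw [ZMod.val_add]
  rw [step1, Finset.range_eq_Ico,
    ← Finset.sum_Ico_consecutive _ (Nat.zero_le (N - d)) (Nat.sub_le N d)]
  congr 1
  · rw [← Finset.range_eq_Ico]
    unfold AACF ACCF
    apply Finset.sum_congr rfl
    intro i hi
    have hiN : i < N - d := Finset.mem_range.1 hi
    rw [Nat.mod_eq_of_lt (show i + d < N by omega)]
  · rw [Finset.sum_Ico_eq_sum_range]
    unfold AACF ACCF
    rw [show N - (N - d) = d from by omega]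
    apply Finset.sum_congr rfl
    intro i hi
    have hid : i < d := Finset.mem_range.1 hi
    have h1 : (N - d + i + d) % N = i := by
      rw [show N - d + i + d = N + i from by omega, Nat.add_mod_left]
      exact Nat.mod_eq_of_lt (by omega)
    rw [h1, show i + (N - d) = N - d + i from by omega]
    ring

lemma tsh_eq (N : ℕ) [NeZero N] (v : ℕ → ℝ) (r m : ℕ) (hm : m ≤ N) :
    Tsh N v (r + 1) m = v (((r : ZMod N) - (m : ℕ)).val) := by
  unfold Tsh
  have h1 : ((r : ZMod N) - (m : ℕ)) = ((r + N - m : ℕ) : ZMod N) := by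
    rw [Nat.cast_sub (by omega : m ≤ r + N)]
    push_cast
    rw [ZMod.natCast_self]
    ring
  rw [h1, ZMod.val_natCast]
  congr 1

lemma shift_inner (N : ℕ) [NeZero N] (v w : ℕ → ℝ) (r s : ℕ) :
    ∑ m ∈ Finset.range N, Tsh N v (r + 1) m * Tsh N w (s + 1) m
      = Pc N (fun y => v y.val) (fun y => w y.val) ((s : ZMod N) - (r : ZMod N)) := by
  have e1 : ∑ m ∈ Finset.range N, Tsh N v (r + 1) m * Tsh N w (s + 1) m
      = ∑ m ∈ Finset.range N, v (((r : ZMod N) - (m : ℕ)).val)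
          * w (((s : ZMod N) - (m : ℕ)).val) := by
    apply Finset.sum_congr rfl
    intro m hm
    rw [tsh_eq N v r m (le_of_lt (Finset.mem_range.1 hm)),
      tsh_eq N w s m (le_of_lt (Finset.mem_range.1 hm))]
  rw [e1, ← sum_zmod N (fun t => v (((r : ZMod N) - (t : ℕ)).val)
      * w (((s : ZMod N) - (t : ℕ)).val))]
  have e2 : ∀ y : ZMod N,
      v (((r : ZMod N) - ((y.val : ℕ) : ZMod N)).val)
        * w (((s : ZMod N) - ((y.val : ℕ) : ZMod N)).val)
      = v (((r : ZMod N) - y).val) * w (((s : ZMod N) - y).val) := by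
    intro y; rw [ZMod.natCast_zmod_val]
  rw [Finset.sum_congr rfl (fun y _ => e2 y)]
  unfold Pc
  apply Fintype.sum_equiv (Equiv.subLeft (r : ZMod N)) _ _ (fun y => ?_)
  simp only [Equiv.subLeft_apply]
  rw [show (r : ZMod N) - y + ((s : ZMod N) - (r : ZMod N)) = (s : ZMod N) - y from by ring]

lemma neg_one_sub_val (N : ℕ) [NeZero N] (y : ZMod N) :
    ((-1 - y : ZMod N)).val = N - 1 - y.val := by
  have hN : 0 < N := Nat.pos_of_ne_zero (NeZero.ne N)
  have hy : y.val < N := ZMod.val_lt y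
  have h1 : (-1 - y : ZMod N) = ((N - 1 - y.val : ℕ) : ZMod N) := by
    rw [Nat.cast_sub (by omega : y.val ≤ N - 1), Nat.cast_sub (by omega : 1 ≤ N),
      ZMod.natCast_self, ZMod.natCast_zmod_val, Nat.cast_one]
    ring
  rw [h1, ZMod.val_natCast, Nat.mod_eq_of_lt (by omega)]

lemma aacf_zero (N : ℕ) (v : ℕ → ℝ) (hv : ∀ i < N, v i = 1 ∨ v i = -1) :
    AACF N v 0 = (N : ℝ) := by
  unfold AACF ACCF
  simp only [Nat.sub_zero, add_zero]
  have h : ∀ i ∈ Finset.range N, v i * v i = 1 := by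
    intro i hi
    rcases hv i (Finset.mem_range.1 hi) with h | h <;> rw [h] <;> norm_num
  rw [Finset.sum_congr rfl h, Finset.sum_const, Finset.card_range, nsmul_eq_mul, mul_one]

lemma aacf_N (N : ℕ) (v : ℕ → ℝ) : AACF N v N = 0 := by
  unfold AACF ACCF
  simp

lemma pc_diag (N : ℕ) [NeZero N] (hN : 2 ≤ N) (a b : ℕ → ℝ)
    (ha : ∀ i < N, a i = 1 ∨ a i = -1) (hb : ∀ i < N, b i = 1 ∨ b i = -1)
    (hGCP : ∀ lam, 1 ≤ lam → lam ≤ N - 1 → AACF N a lam + AACF N b lam = 0)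
    (δ : ZMod N) :
    Pc N (fun y => a y.val) (fun y => a y.val) δ
      + Pc N (fun y => b y.val) (fun y => b y.val) δ
      = if δ = 0 then ((2 * N : ℕ) : ℝ) else 0 := by
  rw [pc_val, pc_val]
  by_cases h0 : δ = 0
  · subst h0
    rw [if_pos rfl]
    simp only [ZMod.val_zero, Nat.sub_zero]
    rw [aacf_zero N a ha, aacf_zero N b hb, aacf_N, aacf_N]
    push_cast
    ring
  · have hd1 : 1 ≤ δ.val := by
      rcases Nat.eq_zero_or_pos δ.val with h | h
      · exact absurd ((ZMod.val_eq_zero δ).1 h) h0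
      · exact h
    have hdN : δ.val < N := ZMod.val_lt δ
    have h1 := hGCP δ.val hd1 (by omega)
    have h2 := hGCP (N - δ.val) (by omega) (by omega)
    rw [if_neg h0]
    unfold AACF at *
    linarith

section GrowLemmas

variable (N : ℕ) (a b c d : ℕ → ℝ)

lemma Grow_top_lo {r m : ℕ} (hr : r < N) (hm : m < N) :
    Grow N a b c d r m = Tsh N a (r + 1) m := by
  unfold Grow; rw [if_pos hr, if_pos hm]

lemma Grow_top_hi {r : ℕ} (hr : r < N) (i : ℕ) :
    Grow N a b c d r (N + i) = Tsh N b (r + 1) i := by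
  unfold Grow
  rw [if_pos hr, if_neg (show ¬ N + i < N by omega), Nat.add_sub_cancel_left]

lemma Grow_bot_lo {r m : ℕ} (hr : ¬ r < N) (hm : m < N) :
    Grow N a b c d r m = Tsh N c (r - N + 1) m := by
  unfold Grow; rw [if_neg hr, if_pos hm]

lemma Grow_bot_hi {r : ℕ} (hr : ¬ r < N) (i : ℕ) :
    Grow N a b c d r (N + i) = Tsh N d (r - N + 1) i := by
  unfold Grow
  rw [if_neg hr, if_neg (show ¬ N + i < N by omega), Nat.add_sub_cancel_left]

end GrowLemmas

lemma stmt13_main (N : ℕ) (hN : 2 ≤ N) (a b : ℕ → ℝ)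
    (ha : ∀ i < N, a i = 1 ∨ a i = -1) (hb : ∀ i < N, b i = 1 ∨ b i = -1)
    (hGCP : ∀ lam, 1 ≤ lam → lam ≤ N - 1 → AACF N a lam + AACF N b lam = 0) :
    ∀ G : Matrix (Fin (2 * N)) (Fin (2 * N)) ℝ,
      G = (fun r m =>
        Grow N a b (fun i => b (N - 1 - i)) (fun i => -a (N - 1 - i)) r.1 m.1) →
      G * Gᵀ = ((2 * N : ℕ) : ℝ) • (1 : Matrix (Fin (2 * N)) (Fin (2 * N)) ℝ) := by
  intro G hG
  subst hG
  haveI : NeZero N := ⟨by omega⟩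
  set c : ℕ → ℝ := fun i => b (N - 1 - i) with hcdef
  set d : ℕ → ℝ := fun i => -a (N - 1 - i) with hddef
  -- ZMod versions
  set A : ZMod N → ℝ := fun y => a y.val with hA
  set B : ZMod N → ℝ := fun y => b y.val with hB
  have hcB : (fun y : ZMod N => c y.val) = fun y => B (-1 - y) := by
    funext y
    show b (N - 1 - y.val) = b ((-1 - y : ZMod N)).val
    rw [neg_one_sub_val]
  have hdA : (fun y : ZMod N => d y.val) = fun y => -A (-1 - y) := by
    funext y
    show -a (N - 1 - y.val) = -a ((-1 - y : ZMod N)).val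
    rw [neg_one_sub_val]
  ext r s
  show (Matrix.of (fun r m : Fin (2 * N) => Grow N a b c d r.1 m.1) *
    (Matrix.of (fun r m : Fin (2 * N) => Grow N a b c d r.1 m.1))ᵀ) r s = _
  rw [Matrix.mul_apply]
  simp only [Matrix.of_apply, Matrix.transpose_apply, Matrix.smul_apply, Matrix.one_apply, smul_eq_mul,
    mul_ite, mul_one, mul_zero]
  rw [Fin.sum_univ_eq_sum_range
    (fun j => Grow N a b c d r.1 j * Grow N a b c d s.1 j) (2 * N)]
  rw [Finset.range_eq_Ico,
    ← Finset.sum_Ico_consecutive _ (Nat.zero_le N) (by omega : N ≤ 2 * N),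
    ← Finset.range_eq_Ico, Finset.sum_Ico_eq_sum_range,
    show 2 * N - N = N from by omega]
  have hr2 : r.1 < N + N := by have := r.2; omega
  have hs2 : s.1 < N + N := by have := s.2; omega
  by_cases hr : r.1 < N <;> by_cases hs : s.1 < N
  · -- top-top
    have e1 : ∑ m ∈ Finset.range N, Grow N a b c d r.1 m * Grow N a b c d s.1 m
        = Pc N A A ((s.1 : ZMod N) - (r.1 : ZMod N)) := by
      rw [← shift_inner]
      apply Finset.sum_congr rfl
      intro m hm
      rw [Grow_top_lo N a b c d hr (Finset.mem_range.1 hm),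
        Grow_top_lo N a b c d hs (Finset.mem_range.1 hm)]
    have e2 : ∑ i ∈ Finset.range N,
        Grow N a b c d r.1 (N + i) * Grow N a b c d s.1 (N + i)
        = Pc N B B ((s.1 : ZMod N) - (r.1 : ZMod N)) := by
      rw [← shift_inner]
      apply Finset.sum_congr rfl
      intro i _
      rw [Grow_top_hi N a b c d hr i, Grow_top_hi N a b c d hs i]
    rw [e1, e2, pc_diag N hN a b ha hb hGCP]
    have hiff : ((s.1 : ZMod N) - (r.1 : ZMod N) = 0) ↔ r = s := by
      rw [sub_eq_zero]
      constructor
      · intro h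
        have := congrArg ZMod.val h
        rw [ZMod.val_cast_of_lt hs, ZMod.val_cast_of_lt hr] at this
        exact (Fin.ext this.symm)
      · rintro rfl; rfl
    simp only [hiff]
  · -- top-bottom
    have e1 : ∑ m ∈ Finset.range N, Grow N a b c d r.1 m * Grow N a b c d s.1 m
        = Pc N A (fun y => c y.val) (((s.1 - N : ℕ) : ZMod N) - (r.1 : ZMod N)) := by
      rw [← shift_inner]
      apply Finset.sum_congr rfl
      intro m hm
      rw [Grow_top_lo N a b c d hr (Finset.mem_range.1 hm),
        Grow_bot_lo N a b c d hs (Finset.mem_range.1 hm)]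
    have e2 : ∑ i ∈ Finset.range N,
        Grow N a b c d r.1 (N + i) * Grow N a b c d s.1 (N + i)
        = Pc N B (fun y => d y.val) (((s.1 - N : ℕ) : ZMod N) - (r.1 : ZMod N)) := by
      rw [← shift_inner]
      apply Finset.sum_congr rfl
      intro i _
      rw [Grow_top_hi N a b c d hr i, Grow_bot_hi N a b c d hs i]
    rw [e1, e2, hcB, hdA, pc_cross]
    rw [if_neg (show ¬ r = s by intro h; rw [h] at hr; exact hs hr)]
  · -- bottom-top
    have e1 : ∑ m ∈ Finset.range N, Grow N a b c d r.1 m * Grow N a b c d s.1 m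
        = Pc N (fun y => c y.val) A ((s.1 : ZMod N) - ((r.1 - N : ℕ) : ZMod N)) := by
      rw [← shift_inner]
      apply Finset.sum_congr rfl
      intro m hm
      rw [Grow_bot_lo N a b c d hr (Finset.mem_range.1 hm),
        Grow_top_lo N a b c d hs (Finset.mem_range.1 hm)]
    have e2 : ∑ i ∈ Finset.range N,
        Grow N a b c d r.1 (N + i) * Grow N a b c d s.1 (N + i)
        = Pc N (fun y => d y.val) B ((s.1 : ZMod N) - ((r.1 - N : ℕ) : ZMod N)) := by
      rw [← shift_inner]
      apply Finset.sum_congr rfl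
      intro i _
      rw [Grow_bot_hi N a b c d hr i, Grow_top_hi N a b c d hs i]
    rw [e1, e2, hcB, hdA]
    rw [pc_symm N (fun y => B (-1 - y)) A, pc_symm N (fun y => -A (-1 - y)) B]
    rw [pc_cross]
    rw [if_neg (show ¬ r = s by intro h; rw [h] at hr; exact hr hs)]
  · -- bottom-bottom
    have e1 : ∑ m ∈ Finset.range N, Grow N a b c d r.1 m * Grow N a b c d s.1 m
        = Pc N (fun y => c y.val) (fun y => c y.val)
            (((s.1 - N : ℕ) : ZMod N) - ((r.1 - N : ℕ) : ZMod N)) := by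
      rw [← shift_inner]
      apply Finset.sum_congr rfl
      intro m hm
      rw [Grow_bot_lo N a b c d hr (Finset.mem_range.1 hm),
        Grow_bot_lo N a b c d hs (Finset.mem_range.1 hm)]
    have e2 : ∑ i ∈ Finset.range N,
        Grow N a b c d r.1 (N + i) * Grow N a b c d s.1 (N + i)
        = Pc N (fun y => d y.val) (fun y => d y.val)
            (((s.1 - N : ℕ) : ZMod N) - ((r.1 - N : ℕ) : ZMod N)) := by
      rw [← shift_inner]
      apply Finset.sum_congr rfl
      intro i _
      rw [Grow_bot_hi N a b c d hr i, Grow_bot_hi N a b c d hs i]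
    rw [e1, e2, hcB, hdA, pc_rev, pc_neg, pc_rev]
    rw [add_comm, pc_diag N hN a b ha hb hGCP]
    have hiff : ((((s.1 - N : ℕ) : ZMod N)) - (((r.1 - N : ℕ) : ZMod N)) = 0) ↔ r = s := by
      rw [sub_eq_zero]
      constructor
      · intro h
        have := congrArg ZMod.val h
        rw [ZMod.val_cast_of_lt (show s.1 - N < N by omega),
          ZMod.val_cast_of_lt (show r.1 - N < N by omega)] at this
        exact Fin.ext (by omega)
      · rintro rfl; rfl
    simp only [hiff]

/--
Let `(a, b)` be a Golay complementary pair of `±1` sequences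
of length `N ≥ 2` and set `c_i = b_{N-1-i}`, `d_i = -a_{N-1-i}`.  Then the
`2N × 2N` matrix `G = [[Cir(a), Cir(b)], [Cir(c), Cir(d)]]` satisfies
`G · Gᵀ = 2N · I_{2N}`, i.e. `G` is a Hadamard matrix of order `2N`.
-/
theorem stmt13 (N : ℕ) (hN : 2 ≤ N) (a b : ℕ → ℝ)
    (ha : ∀ i < N, a i = 1 ∨ a i = -1) (hb : ∀ i < N, b i = 1 ∨ b i = -1)
    (hGCP : ∀ lam, 1 ≤ lam → lam ≤ N - 1 → AACF N a lam + AACF N b lam = 0) :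
    let G : Matrix (Fin (2 * N)) (Fin (2 * N)) ℝ :=
      fun r m => Grow N a b (fun i => b (N - 1 - i)) (fun i => -a (N - 1 - i))
        r.1 m.1
    G * Gᵀ = ((2 * N : ℕ) : ℝ) • (1 : Matrix (Fin (2 * N)) (Fin (2 * N)) ℝ) := by
  intro G
  exact stmt13_main N hN a b ha hb hGCP G rfl
end

section
/- Let (a, b) be a Golay complementary pair of {+1,-1}-valued sequences of length N ≥ 2, let c_i = b_{N-1-i} and d_i = -a_{N-1-i}, and let G = [[Cir(a), Cir(b)], [Cir(c), Cir(d)]] with rows R_1, …, R_{2N}. For 1 ≤ i ≤ 2N define the code S^i = {R_i ⊙ R_1, R_i ⊙ R_2, …, R_i ⊙ R_{2N}}, where ⊙ denotes the entrywise (Hadamard) product of sequences of length 2N. Then {S^1, …, S^{2N}} forms a (2N, 2N, 2N)-complete complementary code: for all 1 ≤ i, j ≤ 2N and all 0 ≤ λ ≤ 2N-1, Σ_{k=1}^{2N} C(R_i ⊙ R_k, R_j ⊙ R_k)(λ) = (2N)^2 if λ = 0 and i = j, and = 0 otherwise. -/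
/-- periodic correlation -/
noncomputable def PC (N : ℕ) (v w : ℕ → ℝ) (s : ℕ) : ℝ :=
  ∑ j ∈ Finset.range N, v j * w ((j + s) % N)

lemma mod_invol {N K m : ℕ} (hN : 0 < N) (hK : N ≤ K) (hm : m < N) :
    (K - (K - m) % N) % N = m := by
  have ht : (K - m) % N < N := Nat.mod_lt _ hN
  have h : N * ((K - m) / N) + (K - m) % N = K - m := Nat.div_add_mod _ _
  set A := N * ((K - m) / N) with hA
  have h2 : K - (K - m) % N = m + A := by omega
  rw [h2, hA, Nat.add_mul_mod_self_left, Nat.mod_eq_of_lt hm]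

lemma shift_inner_s14 (N : ℕ) (hN : 0 < N) (v w : ℕ → ℝ) (k k' : ℕ)
    (hk1 : 1 ≤ k) (hk2 : k ≤ N) (hk1' : 1 ≤ k') (hk2' : k' ≤ N) :
    ∑ m ∈ Finset.range N, Tsh N v k m * Tsh N w k' m
      = PC N v w ((k' + N - k) % N) := by
  unfold PC Tsh
  refine Finset.sum_nbij' (fun m => (k - 1 + N - m) % N)
    (fun m => (k - 1 + N - m) % N) ?_ ?_ ?_ ?_ ?_
  · intro m _; exact Finset.mem_range.mpr (Nat.mod_lt _ hN)
  · intro m _; exact Finset.mem_range.mpr (Nat.mod_lt _ hN)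
  · intro m hm
    exact mod_invol hN (by omega) (Finset.mem_range.mp hm)
  · intro m hm
    exact mod_invol hN (by omega) (Finset.mem_range.mp hm)
  · intro m hm
    have hm' : m < N := Finset.mem_range.mp hm
    show v ((k - 1 + N - m) % N) * w ((k' - 1 + N - m) % N)
      = v ((k - 1 + N - m) % N) * w (((k - 1 + N - m) % N + (k' + N - k) % N) % N)
    congr 2
    rw [Nat.add_mod_mod, Nat.mod_add_mod]
    have h : (k - 1 + N - m) + (k' + N - k) = (k' - 1 + N - m) + N := by omega
    rw [h, Nat.add_mod_right]

lemma PC_split (N : ℕ) (v w : ℕ → ℝ) (s : ℕ) (hs : s < N) :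
    PC N v w s = (∑ j ∈ Finset.range (N - s), v j * w (j + s))
      + ∑ i ∈ Finset.range s, v (N - s + i) * w i := by
  unfold PC
  have hN : N = (N - s) + s := by omega
  conv_lhs => rw [hN]
  rw [Finset.sum_range_add]
  congr 1
  · apply Finset.sum_congr rfl
    intro j hj
    have : j < N - s := Finset.mem_range.mp hj
    rw [Nat.mod_eq_of_lt (by omega)]
  · apply Finset.sum_congr rfl
    intro i hi
    have hi' : i < s := Finset.mem_range.mp hi
    have h1 : N - s + i + s = ((N - s) + s) + i := by omega
    rw [h1, Nat.add_mod_left, Nat.mod_eq_of_lt (by omega)]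

lemma PC_self (N : ℕ) (v : ℕ → ℝ) (s : ℕ) (hs1 : 1 ≤ s) (hs2 : s < N) :
    PC N v v s = AACF N v s + AACF N v (N - s) := by
  rw [PC_split N v v s hs2]
  unfold AACF ACCF
  congr 1
  have h : N - (N - s) = s := by omega
  rw [h]
  apply Finset.sum_congr rfl
  intro i hi
  have : i + (N - s) = N - s + i := by omega
  rw [this, mul_comm]

lemma PC_rev_self (N : ℕ) (v : ℕ → ℝ) (s : ℕ) (hs1 : 1 ≤ s) (hs2 : s < N) :
    PC N (fun i => v (N - 1 - i)) (fun i => v (N - 1 - i)) s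
      = AACF N v s + AACF N v (N - s) := by
  rw [PC_split _ _ _ s hs2]
  unfold AACF ACCF
  congr 1
  · refine Finset.sum_nbij' (fun j => N - s - 1 - j) (fun j => N - s - 1 - j) ?_ ?_ ?_ ?_ ?_
    · intro j hj; simp only [Finset.mem_range] at *; omega
    · intro j hj; simp only [Finset.mem_range] at *; omega
    · intro j hj; simp only [Finset.mem_range] at *; omega
    · intro j hj; simp only [Finset.mem_range] at *; omega
    · intro j hj
      simp only [Finset.mem_range] at hj
      have h1 : N - 1 - j = (N - s - 1 - j) + s := by omega
      have h2 : N - 1 - (j + s) = N - s - 1 - j := by omega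
      rw [h1, h2, mul_comm]
  · have h : N - (N - s) = s := by omega
    rw [h]
    refine Finset.sum_nbij' (fun i => s - 1 - i) (fun i => s - 1 - i) ?_ ?_ ?_ ?_ ?_
    · intro i hi; simp only [Finset.mem_range] at *; omega
    · intro i hi; simp only [Finset.mem_range] at *; omega
    · intro i hi; simp only [Finset.mem_range] at *; omega
    · intro i hi; simp only [Finset.mem_range] at *; omega
    · intro i hi
      simp only [Finset.mem_range] at hi
      have h1 : N - 1 - (N - s + i) = s - 1 - i := by omega
      have h2 : N - 1 - i = (s - 1 - i) + (N - s) := by omega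
      rw [h1, h2, mul_comm]

lemma PC_cross (N : ℕ) (a b : ℕ → ℝ) (s : ℕ) (hN : 0 < N) (hs : s < N) :
    PC N a (fun i => b (N - 1 - i)) s + PC N b (fun i => -a (N - 1 - i)) s = 0 := by
  have hneg : PC N b (fun i => -a (N - 1 - i)) s = -PC N b (fun i => a (N - 1 - i)) s := by
    unfold PC
    rw [← Finset.sum_neg_distrib]
    apply Finset.sum_congr rfl
    intro j _; ring
  rw [hneg]
  have heq : PC N a (fun i => b (N - 1 - i)) s = PC N b (fun i => a (N - 1 - i)) s := by
    rw [PC_split _ _ _ s hs, PC_split _ _ _ s hs]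
    congr 1
    · refine Finset.sum_nbij' (fun j => N - s - 1 - j) (fun j => N - s - 1 - j) ?_ ?_ ?_ ?_ ?_
      · intro j hj; simp only [Finset.mem_range] at *; omega
      · intro j hj; simp only [Finset.mem_range] at *; omega
      · intro j hj; simp only [Finset.mem_range] at *; omega
      · intro j hj; simp only [Finset.mem_range] at *; omega
      · intro j hj
        simp only [Finset.mem_range] at hj
        have h1 : N - 1 - (j + s) = N - s - 1 - j := by omega
        have h2 : N - 1 - ((N - s - 1 - j) + s) = j := by omega
        rw [h1, h2, mul_comm]
    · refine Finset.sum_nbij' (fun i => s - 1 - i) (fun i => s - 1 - i) ?_ ?_ ?_ ?_ ?_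
      · intro i hi; simp only [Finset.mem_range] at *; omega
      · intro i hi; simp only [Finset.mem_range] at *; omega
      · intro i hi; simp only [Finset.mem_range] at *; omega
      · intro i hi; simp only [Finset.mem_range] at *; omega
      · intro i hi
        simp only [Finset.mem_range] at hi
        have h1 : N - 1 - i = N - s + (s - 1 - i) := by omega
        have h2 : N - 1 - (s - 1 - i) = N - s + i := by omega
        rw [h1, h2, mul_comm]
  rw [heq]; ring

lemma PC_diag (N : ℕ) (v : ℕ → ℝ) (hv : ∀ i < N, v i = 1 ∨ v i = -1) :
    PC N v v 0 = (N : ℝ) := by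
  unfold PC
  have : ∀ j ∈ Finset.range N, v j * v ((j + 0) % N) = 1 := by
    intro j hj
    have hj' : j < N := Finset.mem_range.mp hj
    rw [add_zero, Nat.mod_eq_of_lt hj']
    rcases hv j hj' with h | h <;> rw [h] <;> norm_num
  rw [Finset.sum_congr rfl this]
  simp

lemma sum2N (N : ℕ) (f : ℕ → ℝ) :
    ∑ m ∈ Finset.range (2 * N), f m
      = (∑ m ∈ Finset.range N, f m) + ∑ m ∈ Finset.range N, f (N + m) := by
  rw [two_mul, Finset.sum_range_add]

lemma s_fact (N r r' : ℕ) (hN : 0 < N) (hr : r < N) (hr' : r' < N) :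
    ((r' + 1) + N - (r + 1)) % N < N
    ∧ (((r' + 1) + N - (r + 1)) % N = 0 ↔ r = r') := by
  refine ⟨Nat.mod_lt _ hN, ?_⟩
  rcases le_or_gt r r' with h | h
  · have h1 : (r' + 1) + N - (r + 1) = N + (r' - r) := by omega
    rw [h1, Nat.add_mod_left, Nat.mod_eq_of_lt (by omega)]
    omega
  · have h1 : (r' + 1) + N - (r + 1) = N - (r - r') := by omega
    rw [h1, Nat.mod_eq_of_lt (by omega)]
    omega

section rows
variable (N : ℕ) (hN : 2 ≤ N) (a b : ℕ → ℝ)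

lemma GCP_comb (ha : ∀ i < N, a i = 1 ∨ a i = -1) (hb : ∀ i < N, b i = 1 ∨ b i = -1)
    (hGCP : ∀ lam, 1 ≤ lam → lam ≤ N - 1 → AACF N a lam + AACF N b lam = 0)
    (s : ℕ) (hs1 : 1 ≤ s) (hs2 : s < N) :
    PC N a a s + PC N b b s = 0 := by
  rw [PC_self N a s hs1 hs2, PC_self N b s hs1 hs2]
  have h1 := hGCP s hs1 (by omega)
  have h2 := hGCP (N - s) (by omega) (by omega)
  linarith

lemma GCP_comb_rev (ha : ∀ i < N, a i = 1 ∨ a i = -1) (hb : ∀ i < N, b i = 1 ∨ b i = -1)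
    (hGCP : ∀ lam, 1 ≤ lam → lam ≤ N - 1 → AACF N a lam + AACF N b lam = 0)
    (s : ℕ) (hs1 : 1 ≤ s) (hs2 : s < N) :
    PC N (fun i => b (N - 1 - i)) (fun i => b (N - 1 - i)) s
      + PC N (fun i => -a (N - 1 - i)) (fun i => -a (N - 1 - i)) s = 0 := by
  have hd : PC N (fun i => -a (N - 1 - i)) (fun i => -a (N - 1 - i)) s
      = PC N (fun i => a (N - 1 - i)) (fun i => a (N - 1 - i)) s := by
    unfold PC
    apply Finset.sum_congr rfl
    intro j _; ring
  rw [hd, PC_rev_self N b s hs1 hs2, PC_rev_self N a s hs1 hs2]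
  have h1 := hGCP s hs1 (by omega)
  have h2 := hGCP (N - s) (by omega) (by omega)
  linarith

lemma row_orth (hN2 : 2 ≤ N) (ha : ∀ i < N, a i = 1 ∨ a i = -1) (hb : ∀ i < N, b i = 1 ∨ b i = -1)
    (hGCP : ∀ lam, 1 ≤ lam → lam ≤ N - 1 → AACF N a lam + AACF N b lam = 0) :
    ∀ r < 2 * N, ∀ r' < 2 * N,
      (∑ m ∈ Finset.range (2 * N),
        Grow N a b (fun i => b (N - 1 - i)) (fun i => -a (N - 1 - i)) r m *
        Grow N a b (fun i => b (N - 1 - i)) (fun i => -a (N - 1 - i)) r' m)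
      = if r = r' then ((2 * N : ℕ) : ℝ) else 0 := by
  have hN0 : 0 < N := by omega
  set c : ℕ → ℝ := fun i => b (N - 1 - i) with hc
  set d : ℕ → ℝ := fun i => -a (N - 1 - i) with hd
  have hcpm : ∀ i < N, c i = 1 ∨ c i = -1 := fun i hi => hb _ (by omega)
  have hdpm : ∀ i < N, d i = 1 ∨ d i = -1 := by
    intro i hi
    have := ha (N - 1 - i) (by omega)
    rcases this with h | h <;> simp [hd, h]
  -- the key case computation
  have key : ∀ r < 2 * N, ∀ r' < 2 * N,
      (∑ m ∈ Finset.range (2 * N),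
        Grow N a b c d r m * Grow N a b c d r' m)
      = if r = r' then ((2 * N : ℕ) : ℝ) else 0 := by
    intro r hr r' hr'
    -- split cases on blocks
    rcases lt_or_ge r N with h1 | h1 <;> rcases lt_or_ge r' N with h2 | h2
    · -- top-top
      have e1 : ∀ m ∈ Finset.range N, Grow N a b c d r m * Grow N a b c d r' m
          = Tsh N a (r + 1) m * Tsh N a (r' + 1) m := by
        intro m hm; have := Finset.mem_range.mp hm
        simp [Grow, h1, h2, this]
      have e2 : ∀ m ∈ Finset.range N, Grow N a b c d r (N + m) * Grow N a b c d r' (N + m)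
          = Tsh N b (r + 1) m * Tsh N b (r' + 1) m := by
        intro m hm
        simp [Grow, h1, h2, Nat.not_lt.mpr (Nat.le_add_right N m), Nat.add_sub_cancel_left]
      rw [sum2N, Finset.sum_congr rfl e1, Finset.sum_congr rfl e2,
        shift_inner_s14 N hN0 a a (r+1) (r'+1) (by omega) (by omega) (by omega) (by omega),
        shift_inner_s14 N hN0 b b (r+1) (r'+1) (by omega) (by omega) (by omega) (by omega)]
      obtain ⟨hslt, hs0⟩ := s_fact N r r' hN0 h1 h2
      by_cases hrr : r = r'
      · subst hrr
        rw [hs0.mpr rfl, PC_diag N a ha, PC_diag N b hb]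
        simp [if_pos rfl]; push_cast; ring
      · rw [if_neg hrr]
        exact GCP_comb N a b ha hb hGCP _ (by omega) hslt
    · -- top-bottom: cross, zero for all shifts
      have e1 : ∀ m ∈ Finset.range N, Grow N a b c d r m * Grow N a b c d r' m
          = Tsh N a (r + 1) m * Tsh N c (r' - N + 1) m := by
        intro m hm; have := Finset.mem_range.mp hm
        simp [Grow, h1, Nat.not_lt.mpr h2, this]
      have e2 : ∀ m ∈ Finset.range N, Grow N a b c d r (N + m) * Grow N a b c d r' (N + m)
          = Tsh N b (r + 1) m * Tsh N d (r' - N + 1) m := by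
        intro m hm
        simp [Grow, h1, Nat.not_lt.mpr h2, Nat.not_lt.mpr (Nat.le_add_right N m),
          Nat.add_sub_cancel_left]
      rw [sum2N, Finset.sum_congr rfl e1, Finset.sum_congr rfl e2,
        shift_inner_s14 N hN0 a c (r+1) (r'-N+1) (by omega) (by omega) (by omega) (by omega),
        shift_inner_s14 N hN0 b d (r+1) (r'-N+1) (by omega) (by omega) (by omega) (by omega)]
      rw [if_neg (by omega)]
      exact PC_cross N a b _ hN0 (Nat.mod_lt _ hN0)
    · -- bottom-top: symmetric to previous
      have e1 : ∀ m ∈ Finset.range N, Grow N a b c d r m * Grow N a b c d r' m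
          = Tsh N a (r' + 1) m * Tsh N c (r - N + 1) m := by
        intro m hm; have := Finset.mem_range.mp hm
        simp only [Grow, Nat.not_lt.mpr h1, if_false, if_pos h2, if_pos this]
        ring
      have e2 : ∀ m ∈ Finset.range N, Grow N a b c d r (N + m) * Grow N a b c d r' (N + m)
          = Tsh N b (r' + 1) m * Tsh N d (r - N + 1) m := by
        intro m hm
        simp only [Grow, Nat.not_lt.mpr h1, if_false, if_pos h2,
          Nat.not_lt.mpr (Nat.le_add_right N m), Nat.add_sub_cancel_left]
        ring
      rw [sum2N, Finset.sum_congr rfl e1, Finset.sum_congr rfl e2,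
        shift_inner_s14 N hN0 a c (r'+1) (r-N+1) (by omega) (by omega) (by omega) (by omega),
        shift_inner_s14 N hN0 b d (r'+1) (r-N+1) (by omega) (by omega) (by omega) (by omega)]
      rw [if_neg (by omega)]
      exact PC_cross N a b _ hN0 (Nat.mod_lt _ hN0)
    · -- bottom-bottom
      have e1 : ∀ m ∈ Finset.range N, Grow N a b c d r m * Grow N a b c d r' m
          = Tsh N c (r - N + 1) m * Tsh N c (r' - N + 1) m := by
        intro m hm; have := Finset.mem_range.mp hm
        simp [Grow, Nat.not_lt.mpr h1, Nat.not_lt.mpr h2, this]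
      have e2 : ∀ m ∈ Finset.range N, Grow N a b c d r (N + m) * Grow N a b c d r' (N + m)
          = Tsh N d (r - N + 1) m * Tsh N d (r' - N + 1) m := by
        intro m hm
        simp [Grow, Nat.not_lt.mpr h1, Nat.not_lt.mpr h2,
          Nat.not_lt.mpr (Nat.le_add_right N m), Nat.add_sub_cancel_left]
      rw [sum2N, Finset.sum_congr rfl e1, Finset.sum_congr rfl e2,
        shift_inner_s14 N hN0 c c (r-N+1) (r'-N+1) (by omega) (by omega) (by omega) (by omega),
        shift_inner_s14 N hN0 d d (r-N+1) (r'-N+1) (by omega) (by omega) (by omega) (by omega)]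
      obtain ⟨hslt, hs0⟩ := s_fact N (r - N) (r' - N) hN0 (by omega) (by omega)
      have hsame : (r - N + 1) + N - (r - N + 1) = (r - N + 1) + N - (r - N + 1) := rfl
      by_cases hrr : r = r'
      · subst hrr
        have h0 : ((r - N + 1) + N - (r - N + 1)) % N = 0 := hs0.mpr rfl
        rw [h0, PC_diag N c hcpm, PC_diag N d hdpm]
        simp [if_pos rfl]; push_cast; ring
      · rw [if_neg hrr]
        have hne : ¬ (r - N = r' - N) := by omega
        have hs1 : 1 ≤ ((r' - N + 1) + N - (r - N + 1)) % N := by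
          rcases Nat.eq_zero_or_pos (((r' - N + 1) + N - (r - N + 1)) % N) with h | h
          · exact absurd (hs0.mp h) hne
          · exact h
        exact GCP_comb_rev N a b ha hb hGCP _ hs1 hslt
  exact key

end rows

lemma col_orth (hN2 : 2 ≤ N) (ha : ∀ i < N, a i = 1 ∨ a i = -1)
    (hb : ∀ i < N, b i = 1 ∨ b i = -1)
    (hGCP : ∀ lam, 1 ≤ lam → lam ≤ N - 1 → AACF N a lam + AACF N b lam = 0) :
    ∀ m < 2 * N, ∀ m' < 2 * N,
      (∑ k ∈ Finset.range (2 * N),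
        Grow N a b (fun i => b (N - 1 - i)) (fun i => -a (N - 1 - i)) k m *
        Grow N a b (fun i => b (N - 1 - i)) (fun i => -a (N - 1 - i)) k m')
      = if m = m' then ((2 * N : ℕ) : ℝ) else 0 := by
  have hn0 : 0 < 2 * N := by omega
  set R : ℕ → ℕ → ℝ :=
    Grow N a b (fun i => b (N - 1 - i)) (fun i => -a (N - 1 - i)) with hR
  set n := 2 * N with hn
  have hrow := row_orth N a b hN2 ha hb hGCP
  set M : Matrix (Fin n) (Fin n) ℝ := Matrix.of (fun i j : Fin n => R i j) with hM
  have hMMT : M * M.transpose = ((n : ℕ) : ℝ) • 1 := by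
    ext i j
    simp only [Matrix.mul_apply, Matrix.transpose_apply, hM, Matrix.of_apply,
      Matrix.smul_apply, Matrix.one_apply, smul_eq_mul]
    rw [Fin.sum_univ_eq_sum_range (fun k => R i k * R j k) n]
    rw [hrow i i.isLt j j.isLt]
    by_cases h : i = j
    · subst h; simp [hn]
    · rw [if_neg (fun hv => h (Fin.ext hv)), if_neg h, mul_zero]
  have hne : ((n : ℕ) : ℝ) ≠ 0 := by positivity
  have h1 : M * (((n : ℕ) : ℝ)⁻¹ • M.transpose) = 1 := by
    rw [Matrix.mul_smul, hMMT, smul_smul, inv_mul_cancel₀ hne, one_smul]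
  have h2 : (((n : ℕ) : ℝ)⁻¹ • M.transpose) * M = 1 := mul_eq_one_comm.mp h1
  have hMTM : M.transpose * M = ((n : ℕ) : ℝ) • 1 := by
    have := congrArg (fun X => ((n : ℕ) : ℝ) • X) h2
    simp only [Matrix.smul_mul, smul_smul, mul_inv_cancel₀ hne, one_smul, smul_eq_mul] at this
    rw [← this]
  intro m hm m' hm'
  have := congrFun (congrFun hMTM ⟨m, hm⟩) ⟨m', hm'⟩
  simp only [Matrix.mul_apply, Matrix.transpose_apply, hM, Matrix.of_apply,
    Matrix.smul_apply, Matrix.one_apply, smul_eq_mul] at this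
  rw [Fin.sum_univ_eq_sum_range (fun k => R k m * R k m') n] at this
  rw [this]
  by_cases h : m = m'
  · subst h; simp [Fin.ext_iff]
  · rw [if_neg (fun hv : (⟨m, hm⟩ : Fin n) = ⟨m', hm'⟩ => h (by
      simpa [Fin.ext_iff] using hv)), if_neg h, mul_zero]

/--
Let `(a, b)` be a Golay complementary pair of `±1` sequences
of length `N ≥ 2`, `c_i = b_{N-1-i}`, `d_i = -a_{N-1-i}`, and let
`G = [[Cir(a), Cir(b)], [Cir(c), Cir(d)]]` with rows `R_1, …, R_{2N}`
(0-indexed here as `R 0, …, R (2N-1)`).  For each `i` define the code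
`S^i = {R_i ⊙ R_1, …, R_i ⊙ R_{2N}}`, `⊙` the entrywise product.  Then
`{S^1,…,S^{2N}}` forms a `(2N, 2N, 2N)`-complete complementary code: for all
`i, j < 2N` and all `0 ≤ λ ≤ 2N-1`,
`Σ_{k} C(R_i ⊙ R_k, R_j ⊙ R_k)(λ) = (2N)²` if `λ = 0 ∧ i = j`, else `0`.
-/
theorem stmt14 (N : ℕ) (hN : 2 ≤ N) (a b : ℕ → ℝ)
    (ha : ∀ i < N, a i = 1 ∨ a i = -1) (hb : ∀ i < N, b i = 1 ∨ b i = -1)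
    (hGCP : ∀ lam, 1 ≤ lam → lam ≤ N - 1 → AACF N a lam + AACF N b lam = 0) :
    let R : ℕ → ℕ → ℝ :=
      Grow N a b (fun i => b (N - 1 - i)) (fun i => -a (N - 1 - i))
    ∀ i < 2 * N, ∀ j < 2 * N, ∀ lam ≤ 2 * N - 1,
      (∑ k ∈ Finset.range (2 * N),
        ACCF (2 * N) (fun m => R i m * R k m) (fun m => R j m * R k m) lam) =
      if lam = 0 ∧ i = j then ((2 * N : ℕ) : ℝ) ^ 2 else 0 := by
  intro R i hi j hj lam hlam
  have hrow := row_orth N a b hN ha hb hGCP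
  have hcol := col_orth (N := N) (a := a) (b := b) hN ha hb hGCP
  unfold ACCF
  rw [Finset.sum_comm]
  have step : ∀ m ∈ Finset.range (2 * N - lam),
      (∑ k ∈ Finset.range (2 * N), (R i m * R k m) * (R j (m + lam) * R k (m + lam)))
      = (R i m * R j (m + lam)) * (if m = m + lam then ((2 * N : ℕ) : ℝ) else 0) := by
    intro m hm
    have hm' : m < 2 * N - lam := Finset.mem_range.mp hm
    have hm1 : m < 2 * N := by omega
    have hm2 : m + lam < 2 * N := by omega
    have rearr : ∀ k, (R i m * R k m) * (R j (m + lam) * R k (m + lam))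
        = (R i m * R j (m + lam)) * (R k m * R k (m + lam)) := by intro k; ring
    simp only [rearr]
    rw [← Finset.mul_sum, hcol m hm1 (m + lam) hm2]
  rw [Finset.sum_congr rfl step]
  by_cases hl : lam = 0
  · subst hl
    simp only [add_zero, Nat.sub_zero, true_and, eq_self_iff_true, if_true]
    have : ∀ m ∈ Finset.range (2 * N),
        (R i m * R j m) * ((2 * N : ℕ) : ℝ) = ((2 * N : ℕ) : ℝ) * (R i m * R j m) := by
      intro m _; ring
    rw [Finset.sum_congr rfl this, ← Finset.mul_sum, hrow i hi j hj]
    by_cases hij : i = j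
    · rw [if_pos hij, if_pos hij]; ring
    · rw [if_neg hij, if_neg hij, mul_zero]
  · have : ∀ m ∈ Finset.range (2 * N - lam),
        (R i m * R j (m + lam)) * (if m = m + lam then ((2 * N : ℕ) : ℝ) else 0) = 0 := by
      intro m _
      rw [if_neg (by omega), mul_zero]
    rw [Finset.sum_congr rfl this, Finset.sum_const, smul_zero,
      if_neg (by tauto)]
end

section
/- Fix θ_1, θ_2, θ_3 ∈ {0,1} and let E_4 be the 4×4 circulant Hadamard matrix with rows T^1(v), …, T^4(v), where v_j = (-1)^{f_j} and (f_0, f_1, f_2, f_3) = (θ_3, θ_1+θ_3, θ_2+θ_3, 1+θ_1+θ_2+θ_3) mod 2. Recursively define E_{2^{m+1}} = [[E_{2^m}, E_{2^m}], [E_{2^m}, -E_{2^m}]] for 2^m ≥ 4. For n ≥ 1 set E = E_{2^{n+1}} and let G be any of the four matrices [[E,E],[E,-E]], [[E,E],[-E,E]], [[-E,E],[E,E]], [[E,-E],[E,E]] of order L = 2^{n+2}, with rows R_1, …, R_L. For 1 ≤ i ≤ L define the code S^i = {R_i ⊙ R_1, …, R_i ⊙ R_L}, where ⊙ denotes the entrywise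 product. Then {S^1, …, S^L} forms a (2^{n+2}, 2^{n+2}, 2^{n+2}, 2^{n+1})-cross Z-complementary sequence set and also a (2^{n+2}, 2^{n+2}, 2^{n+2})-complete complementary code. -/
/-- `IsCZCSS K M L Z S`: the `K` codes `S 0, …, S (K-1)`, each consisting of
`M` length-`L` sequences, form a `(K, M, L, Z)`-cross Z-complementary sequence
set, with `T₁ = {1,…,Z}`, `T₂ = {L-Z,…,L-1}`, `T = {1,…,L-1}`:
(i) within-code AACF sums vanish on `(T₁ ∪ T₂) ∩ T`;
(ii) within-code adjacent cross-correlation sums vanish on `T₂`;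
(iii) between distinct codes, aligned cross-correlation sums vanish on
`{0} ∪ T₁ ∪ T₂`;
(iv) between distinct codes, adjacent cross-correlation sums vanish on `T₂`. -/
def IsCZCSS (K M L Z : ℕ) (S : ℕ → ℕ → ℕ → ℝ) : Prop :=
  (∀ p < K, ∀ lam, 1 ≤ lam → lam ≤ L - 1 → (lam ≤ Z ∨ L - Z ≤ lam) →
    ∑ j ∈ Finset.range M, AACF L (S p j) lam = 0) ∧
  (∀ p < K, ∀ lam, L - Z ≤ lam → lam ≤ L - 1 →
    ∑ j ∈ Finset.range M, ACCF L (S p j) (S p ((j + 1) % M)) lam = 0) ∧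
  (∀ p < K, ∀ p' < K, p ≠ p' →
    ∀ lam, (lam = 0 ∨ (1 ≤ lam ∧ lam ≤ Z) ∨ (L - Z ≤ lam ∧ lam ≤ L - 1)) →
    ∑ j ∈ Finset.range M, ACCF L (S p j) (S p' j) lam = 0) ∧
  (∀ p < K, ∀ p' < K, p ≠ p' → ∀ lam, L - Z ≤ lam → lam ≤ L - 1 →
    ∑ j ∈ Finset.range M, ACCF L (S p j) (S p' ((j + 1) % M)) lam = 0)

/-- `IsCCC N L S`: the `N` codes `S 0, …, S (N-1)`, each of `N` length-`L`
sequences, form an `(N, N, L)`-complete complementary code. -/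
def IsCCC (N L : ℕ) (S : ℕ → ℕ → ℕ → ℝ) : Prop :=
  ∀ p < N, ∀ p' < N, ∀ lam ≤ L - 1,
    (∑ m ∈ Finset.range N, ACCF L (S p m) (S p' m) lam) =
      if lam = 0 ∧ p = p' then (N : ℝ) * (L : ℝ) else 0


/-! ### Auxiliary machinery -/

section Aux

open Finset

theorem gbf_mul (a b : ZMod 2) : (-1:ℝ)^((a+b).val) = (-1)^a.val * (-1)^b.val := by
  rw [ZMod.val_add, ← pow_add, neg_one_pow_eq_pow_mod_two, Nat.mod_mod_of_dvd _ (by norm_num),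
    ← neg_one_pow_eq_pow_mod_two]

theorem gbfV0 (t₁ t₂ t₃ : ZMod 2) : gbfV t₁ t₂ t₃ 0 = (-1:ℝ)^t₃.val := by simp [gbfV]

theorem gbfV1 (t₁ t₂ t₃ : ZMod 2) : gbfV t₁ t₂ t₃ 1 = (-1:ℝ)^t₁.val * (-1)^t₃.val := by
  simp [gbfV, gbf_mul]

theorem gbfV2 (t₁ t₂ t₃ : ZMod 2) : gbfV t₁ t₂ t₃ 2 = (-1:ℝ)^t₂.val * (-1)^t₃.val := by
  simp [gbfV, gbf_mul]

theorem gbfV3 (t₁ t₂ t₃ : ZMod 2) :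
    gbfV t₁ t₂ t₃ 3 = -((-1:ℝ)^t₁.val * (-1)^t₂.val * (-1)^t₃.val) := by
  simp only [gbfV]
  norm_num
  rw [show (1 + t₁ + t₂ + t₃ : ZMod 2) = 1 + (t₁ + (t₂ + t₃)) by ring, gbf_mul, gbf_mul, gbf_mul,
    ZMod.val_one]
  ring

/-- A generic block matrix with signs `σ`. -/
noncomputable def blockGen (σ : Bool → Bool → ℝ) (E : ℕ → ℕ → ℝ) (L₀ : ℕ) : ℕ → ℕ → ℝ :=
  fun i j => σ (decide (L₀ ≤ i)) (decide (L₀ ≤ j)) * E (i % L₀) (j % L₀)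

/-- `M` restricted to `[0,L)²` is a Hadamard matrix. -/
structure HadOn (M : ℕ → ℕ → ℝ) (L : ℕ) : Prop where
  pm : ∀ i < L, ∀ j < L, M i j = 1 ∨ M i j = -1
  row : ∀ p < L, ∀ q < L, p ≠ q → ∑ m ∈ Finset.range L, M p m * M q m = 0
  col : ∀ i < L, ∀ k < L, i ≠ k → ∑ j ∈ Finset.range L, M j i * M j k = 0

theorem sign_pair {a b c d : ℝ} (ha : a = 1 ∨ a = -1) (hb : b = 1 ∨ b = -1)
    (hc : c = 1 ∨ c = -1) (hd : d = 1 ∨ d = -1) (h : a * b * c * d = -1) :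
    a * b + c * d = 0 := by
  rcases ha with rfl|rfl <;> rcases hb with rfl|rfl <;> rcases hc with rfl|rfl <;>
    rcases hd with rfl|rfl <;> norm_num at h <;> norm_num

theorem sum_range_double (L₀ : ℕ) (f : ℕ → ℝ) :
    ∑ m ∈ Finset.range (2 * L₀), f m = ∑ m ∈ Finset.range L₀, (f m + f (m + L₀)) := by
  rw [two_mul, Finset.sum_range_add, Finset.sum_add_distrib]
  congr 1
  exact Finset.sum_congr rfl fun m _ => by rw [add_comm]

variable {σ : Bool → Bool → ℝ} {E : ℕ → ℕ → ℝ} {L₀ : ℕ}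

theorem hadOn_blockGen (hL : 0 < L₀) (hσ : ∀ a b, σ a b = 1 ∨ σ a b = -1)
    (hprod : σ false false * σ false true * σ true false * σ true true = -1)
    (hE : HadOn E L₀) : HadOn (blockGen σ E L₀) (2 * L₀) := by
  constructor
  · intro i _ j _
    rcases hσ (decide (L₀ ≤ i)) (decide (L₀ ≤ j)) with h1|h1 <;>
      rcases hE.pm (i % L₀) (Nat.mod_lt _ hL) (j % L₀) (Nat.mod_lt _ hL) with h2|h2 <;>
        simp [blockGen, h1, h2]
  · intro p hp q hq hpq
    rw [sum_range_double]
    have key : ∀ m < L₀, blockGen σ E L₀ p m * blockGen σ E L₀ q m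
        + blockGen σ E L₀ p (m + L₀) * blockGen σ E L₀ q (m + L₀)
        = (σ (decide (L₀ ≤ p)) false * σ (decide (L₀ ≤ q)) false
           + σ (decide (L₀ ≤ p)) true * σ (decide (L₀ ≤ q)) true)
          * (E (p % L₀) m * E (q % L₀) m) := by
      intro m hm
      have e1 : m % L₀ = m := Nat.mod_eq_of_lt hm
      have e2 : (m + L₀) % L₀ = m := by rw [Nat.add_mod_right, e1]
      have e3 : decide (L₀ ≤ m) = false := decide_eq_false (by omega)
      have e4 : decide (L₀ ≤ m + L₀) = true := decide_eq_true (by omega)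
      simp only [blockGen, e1, e2, e3, e4]
      ring
    rw [Finset.sum_congr rfl fun m hm => key m (Finset.mem_range.mp hm), ← Finset.mul_sum]
    by_cases hmod : p % L₀ = q % L₀
    · have hc : σ (decide (L₀ ≤ p)) false * σ (decide (L₀ ≤ q)) false
          + σ (decide (L₀ ≤ p)) true * σ (decide (L₀ ≤ q)) true = 0 := by
        by_cases h1 : L₀ ≤ p <;> by_cases h2 : L₀ ≤ q
        · refine absurd ?_ hpq
          have ea : p % L₀ = p - L₀ := by
            rw [Nat.mod_eq_sub_mod h1, Nat.mod_eq_of_lt (by omega)]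
          have eb : q % L₀ = q - L₀ := by
            rw [Nat.mod_eq_sub_mod h2, Nat.mod_eq_of_lt (by omega)]
          omega
        · simp only [decide_eq_true h1, decide_eq_false h2]
          have := sign_pair (hσ true false) (hσ false false) (hσ true true) (hσ false true)
            (by linear_combination hprod)
          linarith [this]
        · simp only [decide_eq_false h1, decide_eq_true h2]
          have := sign_pair (hσ false false) (hσ true false) (hσ false true) (hσ true true)
            (by linear_combination hprod)
          linarith [this]
        · refine absurd ?_ hpq
          have ea : p % L₀ = p := Nat.mod_eq_of_lt (by omega)
          have eb : q % L₀ = q := Nat.mod_eq_of_lt (by omega)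
          omega
      rw [hc, zero_mul]
    · rw [hE.row (p % L₀) (Nat.mod_lt _ hL) (q % L₀) (Nat.mod_lt _ hL) hmod, mul_zero]
  · intro i hi k hk hik
    rw [sum_range_double]
    have key : ∀ j < L₀, blockGen σ E L₀ j i * blockGen σ E L₀ j k
        + blockGen σ E L₀ (j + L₀) i * blockGen σ E L₀ (j + L₀) k
        = (σ false (decide (L₀ ≤ i)) * σ false (decide (L₀ ≤ k))
           + σ true (decide (L₀ ≤ i)) * σ true (decide (L₀ ≤ k)))
          * (E j (i % L₀) * E j (k % L₀)) := by
      intro j hj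
      have e1 : j % L₀ = j := Nat.mod_eq_of_lt hj
      have e2 : (j + L₀) % L₀ = j := by rw [Nat.add_mod_right, e1]
      have e3 : decide (L₀ ≤ j) = false := decide_eq_false (by omega)
      have e4 : decide (L₀ ≤ j + L₀) = true := decide_eq_true (by omega)
      simp only [blockGen, e1, e2, e3, e4]
      ring
    rw [Finset.sum_congr rfl fun j hj => key j (Finset.mem_range.mp hj), ← Finset.mul_sum]
    by_cases hmod : i % L₀ = k % L₀
    · have hc : σ false (decide (L₀ ≤ i)) * σ false (decide (L₀ ≤ k))
          + σ true (decide (L₀ ≤ i)) * σ true (decide (L₀ ≤ k)) = 0 := by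
        by_cases h1 : L₀ ≤ i <;> by_cases h2 : L₀ ≤ k
        · refine absurd ?_ hik
          have ea : i % L₀ = i - L₀ := by
            rw [Nat.mod_eq_sub_mod h1, Nat.mod_eq_of_lt (by omega)]
          have eb : k % L₀ = k - L₀ := by
            rw [Nat.mod_eq_sub_mod h2, Nat.mod_eq_of_lt (by omega)]
          omega
        · simp only [decide_eq_true h1, decide_eq_false h2]
          have := sign_pair (hσ false true) (hσ false false) (hσ true true) (hσ true false)
            (by linear_combination hprod)
          linarith [this]
        · simp only [decide_eq_false h1, decide_eq_true h2]
          have := sign_pair (hσ false false) (hσ false true) (hσ true false) (hσ true true)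
            (by linear_combination hprod)
          linarith [this]
        · refine absurd ?_ hik
          have ea : i % L₀ = i := Nat.mod_eq_of_lt (by omega)
          have eb : k % L₀ = k := Nat.mod_eq_of_lt (by omega)
          omega
      rw [hc, zero_mul]
    · have hz : ∑ j ∈ Finset.range L₀, E j (i % L₀) * E j (k % L₀) = 0 :=
        hE.col (i % L₀) (Nat.mod_lt _ hL) (k % L₀) (Nat.mod_lt _ hL) hmod
      rw [hz, mul_zero]

/-- Column–shifted-column orthogonality across the block boundary. -/
theorem blockGen_shift (hL : 0 < L₀) (hσ : ∀ a b, σ a b = 1 ∨ σ a b = -1)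
    (hprod : σ false false * σ false true * σ true false * σ true true = -1)
    (hi : i < L₀) (hk : L₀ ≤ k) :
    ∑ j ∈ Finset.range (2 * L₀),
      blockGen σ E L₀ j i * blockGen σ E L₀ ((j + 1) % (2 * L₀)) k = 0 := by
  rw [sum_range_double]
  apply Finset.sum_eq_zero
  intro j hj
  have hjL : j < L₀ := Finset.mem_range.mp hj
  have ei : decide (L₀ ≤ i) = false := decide_eq_false (by omega)
  have ek : decide (L₀ ≤ k) = true := decide_eq_true hk
  have ej : decide (L₀ ≤ j) = false := decide_eq_false (by omega)
  have ejL : decide (L₀ ≤ j + L₀) = true := decide_eq_true (by omega)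
  have e1 : j % L₀ = j := Nat.mod_eq_of_lt hjL
  have e2 : (j + L₀) % L₀ = j := by rw [Nat.add_mod_right, e1]
  by_cases hcase : j + 1 < L₀
  · have f1 : (j + 1) % (2 * L₀) = j + 1 := Nat.mod_eq_of_lt (by omega)
    have f2 : (j + L₀ + 1) % (2 * L₀) = j + L₀ + 1 := Nat.mod_eq_of_lt (by omega)
    have f3 : (j + 1) % L₀ = j + 1 := Nat.mod_eq_of_lt hcase
    have f4 : (j + L₀ + 1) % L₀ = j + 1 := by
      rw [show j + L₀ + 1 = j + 1 + L₀ by ring, Nat.add_mod_right, f3]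
    have g1 : decide (L₀ ≤ j + 1) = false := decide_eq_false (by omega)
    have g2 : decide (L₀ ≤ j + L₀ + 1) = true := decide_eq_true (by omega)
    simp only [blockGen, f1, f2, e1, e2, f3, f4, ei, ek, ej, ejL, g1, g2]
    have hs := sign_pair (hσ false false) (hσ false true) (hσ true false) (hσ true true) hprod
    linear_combination (E j (i % L₀) * E (j + 1) (k % L₀)) * hs
  · have hj1 : j + 1 = L₀ := by omega
    have f1 : (j + 1) % (2 * L₀) = L₀ := by rw [hj1]; exact Nat.mod_eq_of_lt (by omega)
    have f2 : (j + L₀ + 1) % (2 * L₀) = 0 := by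
      rw [show j + L₀ + 1 = 2 * L₀ by omega, Nat.mod_self]
    have f3 : L₀ % L₀ = 0 := Nat.mod_self L₀
    have f4 : (0:ℕ) % L₀ = 0 := Nat.zero_mod L₀
    have g1 : decide (L₀ ≤ L₀) = true := decide_eq_true le_rfl
    have g2 : decide (L₀ ≤ 0) = false := decide_eq_false (by omega)
    simp only [blockGen, f1, f2, e1, e2, f3, f4, ei, ek, ej, ejL, g1, g2]
    have hs := sign_pair (hσ false false) (hσ true true) (hσ true false) (hσ false true)
      (by linear_combination hprod)
    linear_combination (E j (i % L₀) * E 0 (k % L₀)) * hs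

/-- Swap the order of summation in a correlation sum. -/
theorem corr_swap (B : ℕ → ℕ → ℝ) (L p q lam : ℕ) (g : ℕ → ℕ) :
    ∑ j ∈ Finset.range L,
        ACCF L (fun m => B p m * B j m) (fun m => B q m * B (g j) m) lam
      = ∑ i ∈ Finset.range (L - lam),
          (B p i * B q (i + lam)) * ∑ j ∈ Finset.range L, B j i * B (g j) (i + lam) := by
  unfold ACCF
  rw [Finset.sum_comm]
  refine Finset.sum_congr rfl fun i _ => ?_
  rw [Finset.mul_sum]
  exact Finset.sum_congr rfl fun j _ => by ring

theorem corr_pos {B : ℕ → ℕ → ℝ} {L : ℕ} (hB : HadOn B L) {lam : ℕ} (hlam : 1 ≤ lam)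
    (p q : ℕ) :
    ∑ j ∈ Finset.range L,
      ACCF L (fun m => B p m * B j m) (fun m => B q m * B j m) lam = 0 := by
  have hsw := corr_swap B L p q lam id
  simp only [id_eq] at hsw
  rw [hsw]
  apply Finset.sum_eq_zero
  intro i hi
  have hi' : i < L - lam := Finset.mem_range.mp hi
  have hz : ∑ j ∈ Finset.range L, B j i * B j (i + lam) = 0 :=
    hB.col i (by omega) (i + lam) (by omega) (by omega)
  rw [hz, mul_zero]

theorem corr_zero {B : ℕ → ℕ → ℝ} {L : ℕ} (hB : HadOn B L) {p q : ℕ}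
    (hp : p < L) (hq : q < L) :
    ∑ j ∈ Finset.range L,
      ACCF L (fun m => B p m * B j m) (fun m => B q m * B j m) 0
      = if p = q then (L : ℝ) * L else 0 := by
  have hsw := corr_swap B L p q 0 id
  simp only [id_eq, add_zero, Nat.sub_zero] at hsw
  rw [hsw]
  have hsq : ∀ a b : ℕ, a < L → b < L → B a b * B a b = 1 := by
    intro a b ha hb
    rcases hB.pm a ha b hb with h|h <;> rw [h] <;> norm_num
  have inner : ∀ i ∈ Finset.range L, B p i * B q i * ∑ j ∈ Finset.range L, B j i * B j i
      = B p i * B q i * (L : ℝ) := by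
    intro i hi
    congr 1
    rw [Finset.sum_congr rfl fun j hj => hsq j i (Finset.mem_range.mp hj)
      (Finset.mem_range.mp hi)]
    simp
  rw [Finset.sum_congr rfl inner]
  by_cases hpq : p = q
  · subst hpq
    rw [if_pos rfl]
    have inner2 : ∀ i ∈ Finset.range L, B p i * B p i * (L : ℝ) = (L : ℝ) := by
      intro i hi
      rw [hsq p i hp (Finset.mem_range.mp hi), one_mul]
    rw [Finset.sum_congr rfl inner2]
    simp [mul_comm]
  · rw [if_neg hpq]
    have hrow : ∑ i ∈ Finset.range L, B p i * B q i = 0 := hB.row p hp q hq hpq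
    calc ∑ i ∈ Finset.range L, B p i * B q i * (L:ℝ)
        = (∑ i ∈ Finset.range L, B p i * B q i) * (L:ℝ) := by rw [Finset.sum_mul]
      _ = 0 := by rw [hrow, zero_mul]

theorem corr_shift (hL : 0 < L₀) (hσ : ∀ a b, σ a b = 1 ∨ σ a b = -1)
    (hprod : σ false false * σ false true * σ true false * σ true true = -1)
    {lam : ℕ} (hlam : L₀ ≤ lam) (p q : ℕ) :
    ∑ j ∈ Finset.range (2 * L₀),
      ACCF (2 * L₀) (fun m => blockGen σ E L₀ p m * blockGen σ E L₀ j m)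
        (fun m => blockGen σ E L₀ q m * blockGen σ E L₀ ((j + 1) % (2 * L₀)) m) lam = 0 := by
  rw [corr_swap (blockGen σ E L₀) (2 * L₀) p q lam (fun j => (j + 1) % (2 * L₀))]
  apply Finset.sum_eq_zero
  intro i hi
  have hi' : i < 2 * L₀ - lam := Finset.mem_range.mp hi
  rw [blockGen_shift hL hσ hprod (by omega) (by omega), mul_zero]

/-- The main abstract result. -/
theorem master (hL : 0 < L₀) (hσ : ∀ a b, σ a b = 1 ∨ σ a b = -1)
    (hprod : σ false false * σ false true * σ true false * σ true true = -1)
    (hE : HadOn E L₀) :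
    IsCZCSS (2 * L₀) (2 * L₀) (2 * L₀) L₀
        (fun p j m => blockGen σ E L₀ p m * blockGen σ E L₀ j m) ∧
      IsCCC (2 * L₀) (2 * L₀)
        (fun p j m => blockGen σ E L₀ p m * blockGen σ E L₀ j m) := by
  set B := blockGen σ E L₀ with hBdef
  have hB : HadOn B (2 * L₀) := hadOn_blockGen hL hσ hprod hE
  constructor
  · refine ⟨?_, ?_, ?_, ?_⟩
    · intro p hp lam h1 h2 h3
      exact corr_pos hB h1 p p
    · intro p hp lam h1 h2
      exact corr_shift hL hσ hprod (by omega) p p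
    · intro p hp p' hp' hne lam hlam
      rcases hlam with rfl | ⟨h1, _⟩ | ⟨h1, _⟩
      · rw [corr_zero hB hp hp', if_neg hne]
      · exact corr_pos hB h1 p p'
      · exact corr_pos hB (by omega) p p'
    · intro p hp p' hp' hne lam h1 h2
      exact corr_shift hL hσ hprod (by omega) p p'
  · intro p hp p' hp' lam hlam
    rcases Nat.eq_zero_or_pos lam with rfl | hpos
    · rw [corr_zero hB hp hp']
      by_cases h : p = p' <;> simp [h]
    · rw [corr_pos hB hpos p p']
      rw [if_neg (by omega)]

/-- `E₄` is Hadamard. -/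
theorem had4 (t₁ t₂ t₃ : ZMod 2) : HadOn (Emat t₁ t₂ t₃ 0) 4 := by
  have hx := neg_one_pow_eq_or ℝ t₁.val
  have hy := neg_one_pow_eq_or ℝ t₂.val
  have hz := neg_one_pow_eq_or ℝ t₃.val
  constructor
  · intro i _ j _
    rcases neg_one_pow_eq_or ℝ
      (if ((i % 4 + 4 - j % 4) % 4) % 4 = 0 then t₃
       else if ((i % 4 + 4 - j % 4) % 4) % 4 = 1 then t₁ + t₃
       else if ((i % 4 + 4 - j % 4) % 4) % 4 = 2 then t₂ + t₃
       else 1 + t₁ + t₂ + t₃).val with h|h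
    · left; exact h
    · right; exact h
  · intro p hp q hq hne
    interval_cases p <;> interval_cases q <;> first | (exact absurd rfl hne) | (
      simp only [Emat, Finset.sum_range_succ, Finset.sum_range_zero] <;>
      norm_num [gbfV0, gbfV1, gbfV2, gbfV3] <;>
      rcases hx with hx|hx <;> rcases hy with hy|hy <;> rcases hz with hz|hz <;>
        rw [hx, hy, hz] <;> norm_num)
  · intro i hi k hk hne
    interval_cases i <;> interval_cases k <;> first | (exact absurd rfl hne) | (
      simp only [Emat, Finset.sum_range_succ, Finset.sum_range_zero] <;>
      norm_num [gbfV0, gbfV1, gbfV2, gbfV3] <;>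
      rcases hx with hx|hx <;> rcases hy with hy|hy <;> rcases hz with hz|hz <;>
        rw [hx, hy, hz] <;> norm_num)

noncomputable def sigF : Bool → Bool → ℝ := fun a b => if a && b then -1 else 1
noncomputable def sigG : Bool → Bool → ℝ := fun a b => if a && !b then -1 else 1
noncomputable def sigH : Bool → Bool → ℝ := fun a b => if !a && !b then -1 else 1
noncomputable def sigI : Bool → Bool → ℝ := fun a b => if !a && b then -1 else 1

theorem blockF_eq (E : ℕ → ℕ → ℝ) (L₀ : ℕ) : blockF E L₀ = blockGen sigF E L₀ := by
  funext i j
  by_cases h1 : L₀ ≤ i <;> by_cases h2 : L₀ ≤ j <;> simp [blockF, blockGen, sigF, h1, h2]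

theorem blockG_eq (E : ℕ → ℕ → ℝ) (L₀ : ℕ) : blockG E L₀ = blockGen sigG E L₀ := by
  funext i j
  by_cases h1 : L₀ ≤ i <;> by_cases h2 : L₀ ≤ j <;>
    simp [blockG, blockGen, sigG, h1, h2, Nat.lt_of_not_le, Nat.not_le.mpr, Nat.not_le]

theorem blockH_eq (E : ℕ → ℕ → ℝ) (L₀ : ℕ) : blockH E L₀ = blockGen sigH E L₀ := by
  funext i j
  by_cases h1 : L₀ ≤ i <;> by_cases h2 : L₀ ≤ j <;>
    simp [blockH, blockGen, sigH, h1, h2, Nat.not_le]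

theorem blockI_eq (E : ℕ → ℕ → ℝ) (L₀ : ℕ) : blockI E L₀ = blockGen sigI E L₀ := by
  funext i j
  by_cases h1 : L₀ ≤ i <;> by_cases h2 : L₀ ≤ j <;>
    simp [blockI, blockGen, sigI, h1, h2, Nat.not_le]

theorem hadOn_Emat (t₁ t₂ t₃ : ZMod 2) : ∀ m, HadOn (Emat t₁ t₂ t₃ m) (2 ^ (m + 2)) := by
  intro m
  induction m with
  | zero => exact had4 t₁ t₂ t₃
  | succ m ih =>
    have heq : Emat t₁ t₂ t₃ (m + 1) = blockGen sigF (Emat t₁ t₂ t₃ m) (2 ^ (m + 2)) := by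
      funext i j
      by_cases h1 : 2 ^ (m + 2) ≤ i <;> by_cases h2 : 2 ^ (m + 2) ≤ j <;>
        simp [Emat, blockGen, sigF, h1, h2]
    have h2 : (2 : ℕ) ^ (m + 1 + 2) = 2 * 2 ^ (m + 2) := by ring
    rw [heq, h2]
    exact hadOn_blockGen (Nat.pow_pos (by norm_num)) (by
        intro a b; cases a <;> cases b <;> simp [sigF])
      (by simp [sigF]) ih

end Aux

/--
Fix `θ₁, θ₂, θ₃ ∈ ℤ₂` and build `E₄` from the GBF, then
recursively `E_{2^{m+1}} = [[E_{2^m}, E_{2^m}], [E_{2^m}, -E_{2^m}]]`.  For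
`n ≥ 1` let `E = E_{2^{n+1}}` and let `B` be any of the four matrices
`[[E,E],[E,-E]]`, `[[E,E],[-E,E]]`, `[[-E,E],[E,E]]`, `[[E,-E],[E,E]]` of
order `L = 2^{n+2}`, with rows `R_1, …, R_L`.  With codes
`S^p = {R_p ⊙ R_1, …, R_p ⊙ R_L}` (`⊙` the entrywise product), the collection
`{S^1,…,S^L}` forms a `(2^{n+2}, 2^{n+2}, 2^{n+2}, 2^{n+1})`-CZCSS and also a
`(2^{n+2}, 2^{n+2}, 2^{n+2})`-CCC.
-/
theorem stmt15 (t₁ t₂ t₃ : ZMod 2) (n : ℕ) (hn : 1 ≤ n) :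
    ∀ B ∈ [blockF (Emat t₁ t₂ t₃ (n - 1)) (2 ^ (n + 1)),
           blockG (Emat t₁ t₂ t₃ (n - 1)) (2 ^ (n + 1)),
           blockH (Emat t₁ t₂ t₃ (n - 1)) (2 ^ (n + 1)),
           blockI (Emat t₁ t₂ t₃ (n - 1)) (2 ^ (n + 1))],
      IsCZCSS (2 ^ (n + 2)) (2 ^ (n + 2)) (2 ^ (n + 2)) (2 ^ (n + 1))
        (fun p j m => B p m * B j m) ∧
      IsCCC (2 ^ (n + 2)) (2 ^ (n + 2)) (fun p j m => B p m * B j m) := by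
  intro B hB
  have hL0 : (0:ℕ) < 2 ^ (n + 1) := Nat.pow_pos (by norm_num)
  have hEm : HadOn (Emat t₁ t₂ t₃ (n - 1)) (2 ^ (n + 1)) := by
    have h := hadOn_Emat t₁ t₂ t₃ (n - 1)
    have he : n - 1 + 2 = n + 1 := by omega
    rwa [he] at h
  have hpow : (2:ℕ) ^ (n + 2) = 2 * 2 ^ (n + 1) := by ring
  simp only [List.mem_cons, List.not_mem_nil, or_false] at hB
  rcases hB with rfl | rfl | rfl | rfl
  · rw [hpow, blockF_eq]
    exact master hL0 (by intro a b; cases a <;> cases b <;> norm_num [sigF])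
      (by norm_num [sigF]) hEm
  · rw [hpow, blockG_eq]
    exact master hL0 (by intro a b; cases a <;> cases b <;> norm_num [sigG])
      (by norm_num [sigG]) hEm
  · rw [hpow, blockH_eq]
    exact master hL0 (by intro a b; cases a <;> cases b <;> norm_num [sigH])
      (by norm_num [sigH]) hEm
  · rw [hpow, blockI_eq]
    exact master hL0 (by intro a b; cases a <;> cases b <;> norm_num [sigI])
      (by norm_num [sigI]) hEm
end
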